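/- arXiv:2506.20397 — 9 statements merged into one kernel-verified Lean document; each statement's English description precedes it below -/
import Mathlib

section
/- Let F be holomorphic on an open neighbourhood of 0 in ℂ with F(0) ≠ 0, F'(0) ≠ 0, |F'(0)| ≠ 1, F''(0) = 0, and F'' not identically zero on any neighbourhood of 0. Then K(0) = 0, and for every δ > 0 there exist points z₊ and z₋ with 0 < |z₊| < δ and 0 < |z₋| < δ such that K(z₊) > 0 and K(z₋) < 0; that is, every punctured neighbourhood of 0 contains both points of positive and points of negative Gaussian curvature. -/
/-- Gaussian curvature of the modular surface `(x, y, |F(x+iy)|)` in Lorentz-Minkowski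
3-space, at a point where `F ≠ 0` and `|F'| ≠ 1`:
`K = -(|F'|⁴ - |2FF'' - F'²|²)/(4|F|²(1-|F'|²)²)`. -/
noncomputable def gaussK (F : ℂ → ℂ) (z : ℂ) : ℝ :=
  -((‖deriv F z‖) ^ 4 -
      (‖2 * F z * deriv (deriv F) z - (deriv F z) ^ 2‖) ^ 2) /
    (4 * (‖F z‖) ^ 2 * (1 - (‖deriv F z‖) ^ 2) ^ 2)

lemma gaussK_eq_aux (F : ℂ → ℂ) (z : ℂ) (h2 : deriv F z ≠ 0) :
    gaussK F z = (‖deriv F z‖) ^ 4 /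
        (4 * (‖F z‖) ^ 2 * (1 - (‖deriv F z‖) ^ 2) ^ 2) *
      (Complex.normSq (2 * F z * deriv (deriv F) z / (deriv F z) ^ 2) -
        2 * (2 * F z * deriv (deriv F) z / (deriv F z) ^ 2).re) := by
  have key : 2 * F z * deriv (deriv F) z - (deriv F z) ^ 2
      = (deriv F z) ^ 2 * (2 * F z * deriv (deriv F) z / (deriv F z) ^ 2 - 1) := by
    field_simp
  set w := 2 * F z * deriv (deriv F) z / (deriv F z) ^ 2 with hw
  have habs : (‖(deriv F z) ^ 2 * (w - 1)‖) ^ 2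
      = (‖deriv F z‖) ^ 4 * (Complex.normSq w - 2 * w.re + 1) := by
    rw [norm_mul, norm_pow, mul_pow, ← pow_mul]
    congr 1
    rw [Complex.sq_norm]
    simp only [Complex.normSq_apply, Complex.sub_re, Complex.sub_im, Complex.one_re,
      Complex.one_im]
    ring
  rw [gaussK, key, habs]
  ring

lemma exists_point_aux (a : ℂ) (ha : a ≠ 0) {n : ℕ} (hn : n ≠ 0) {r : ℝ} (hr : 0 < r)
    (σ : ℝ) (hσ : |σ| = 1) :
    ∃ z : ℂ, ‖z‖ = r ∧
      a * z ^ n = ((σ * ‖a‖ * r ^ n : ℝ) : ℂ) := by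
  obtain ⟨w, hw⟩ := IsAlgClosed.exists_pow_nat_eq
    (((σ * ‖a‖ * r ^ n : ℝ) : ℂ) / a) (Nat.pos_of_ne_zero hn)
  have ha' : (0 : ℝ) < ‖a‖ := norm_pos_iff.mpr ha
  refine ⟨w, ?_, ?_⟩
  · have h1 : ‖w‖ ^ n = r ^ n := by
      rw [← norm_pow, hw, norm_div, Complex.norm_real, Real.norm_eq_abs, abs_mul, abs_mul, hσ, one_mul,
        abs_of_pos ha', abs_of_pos (pow_pos hr n), mul_comm,
        mul_div_assoc, div_self (ne_of_gt ha'), mul_one]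
    exact (pow_left_inj₀ (norm_nonneg w) hr.le hn).mp h1
  · rw [hw, mul_div_cancel₀ _ ha]

/-- If `F(0) ≠ 0`, `F'(0) ≠ 0`, `|F'(0)| ≠ 1`, `F''(0) = 0` and `F''` is not
identically zero on any neighbourhood of `0`, then `K(0) = 0` and every punctured
neighbourhood of `0` contains points of positive and of negative Gaussian curvature. -/
theorem sign_gaussK_of_F''_vanishing
    (U : Set ℂ) (hU : IsOpen U) (h0U : (0 : ℂ) ∈ U)
    (F : ℂ → ℂ) (hF : DifferentiableOn ℂ F U)
    (hF0 : F 0 ≠ 0) (hF'0 : deriv F 0 ≠ 0)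
    (hF'abs : ‖deriv F 0‖ ≠ 1)
    (hF''0 : deriv (deriv F) 0 = 0)
    (hF''ne : ∀ V ∈ nhds (0 : ℂ), ∃ z ∈ V, deriv (deriv F) z ≠ 0) :
    gaussK F 0 = 0 ∧
      ∀ δ > (0 : ℝ), ∃ zp zm : ℂ,
        0 < ‖zp‖ ∧ ‖zp‖ < δ ∧
        0 < ‖zm‖ ∧ ‖zm‖ < δ ∧
        0 < gaussK F zp ∧ gaussK F zm < 0 := by
  have hFa : AnalyticOnNhd ℂ F U := hF.analyticOnNhd hU
  have hF'a : AnalyticOnNhd ℂ (deriv F) U := hFa.deriv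
  have hF''a : AnalyticOnNhd ℂ (deriv (deriv F)) U := hF'a.deriv
  -- the quotient function h
  set q : ℂ → ℂ := fun z => 2 * F z * deriv (deriv F) z / (deriv F z) ^ 2 with hq
  have hqa : AnalyticAt ℂ q 0 :=
    ((analyticAt_const.mul (hFa 0 h0U)).mul (hF''a 0 h0U)).div ((hF'a 0 h0U).pow 2)
      (pow_ne_zero 2 hF'0)
  -- eventual nonvanishing facts
  have hFev : ∀ᶠ z in nhds (0 : ℂ), F z ≠ 0 :=
    (hFa 0 h0U).continuousAt.eventually_ne hF0
  have hF'ev : ∀ᶠ z in nhds (0 : ℂ), deriv F z ≠ 0 :=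
    (hF'a 0 h0U).continuousAt.eventually_ne hF'0
  have hF'absev : ∀ᶠ z in nhds (0 : ℂ), ‖deriv F z‖ ≠ 1 :=
    (continuous_norm.continuousAt.comp (hF'a 0 h0U).continuousAt).eventually_ne hF'abs
  -- q is not eventually zero
  have hqne : ¬ ∀ᶠ z in nhds (0 : ℂ), q z = 0 := by
    intro hev
    have : ∀ᶠ z in nhds (0 : ℂ), deriv (deriv F) z = 0 := by
      filter_upwards [hev, hFev, hF'ev] with z h1 h2 h3
      have hnum : 2 * F z * deriv (deriv F) z = 0 := by
        have := div_eq_zero_iff.mp h1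
        rcases this with h | h
        · exact h
        · exact absurd h (pow_ne_zero 2 h3)
      rcases mul_eq_zero.mp hnum with h | h
      · exact absurd h (mul_ne_zero two_ne_zero h2)
      · exact h
    obtain ⟨z, hzV, hzne⟩ := hF''ne {z | deriv (deriv F) z = 0} this
    exact hzne hzV
  obtain ⟨n, g, hga, hg0, heq⟩ := hqa.exists_eventuallyEq_pow_smul_nonzero_iff.mpr hqne
  set a := g 0 with ha
  set ra := ‖a‖ with hra
  have hrapos : (0 : ℝ) < ra := norm_pos_iff.mpr hg0
  have hn : n ≠ 0 := by
    intro h0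
    have h00 : q 0 = (0 - 0 : ℂ) ^ n • g 0 := heq.self_of_nhds
    rw [h0] at h00
    simp only [pow_zero, one_smul, sub_zero] at h00
    have hq00 : q 0 = 0 := by simp [hq, hF''0]
    exact hg0 (by rw [ha, ← h00, hq00])
  -- continuity of g
  have hgev : ∀ᶠ z in nhds (0 : ℂ), ‖g z - a‖ < ra / 2 := by
    have := Metric.tendsto_nhds.mp hga.continuousAt (ra / 2) (by positivity)
    filter_upwards [this] with z hz
    rwa [Complex.dist_eq] at hz
  -- combine all eventual facts into one ball
  have hall : ∀ᶠ z in nhds (0 : ℂ),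
      F z ≠ 0 ∧ deriv F z ≠ 0 ∧ ‖deriv F z‖ ≠ 1 ∧
        q z = (z - 0) ^ n • g z ∧ ‖g z - a‖ < ra / 2 := by
    filter_upwards [hFev, hF'ev, hF'absev, heq, hgev] with z h1 h2 h3 h4 h5
    exact ⟨h1, h2, h3, h4, h5⟩
  obtain ⟨ρ, hρpos, hρ⟩ := Metric.eventually_nhds_iff.mp hall
  -- sign criterion at a point in the ball
  have hsign : ∀ z : ℂ, ‖z‖ < ρ →
      gaussK F z = (‖deriv F z‖) ^ 4 /
          (4 * (‖F z‖) ^ 2 * (1 - (‖deriv F z‖) ^ 2) ^ 2) *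
        (Complex.normSq (q z) - 2 * (q z).re) ∧
      0 < (‖deriv F z‖) ^ 4 /
          (4 * (‖F z‖) ^ 2 * (1 - (‖deriv F z‖) ^ 2) ^ 2) ∧
      q z = z ^ n * g z := by
    intro z hz
    have hz' : dist z 0 < ρ := by rwa [Complex.dist_eq, sub_zero]
    obtain ⟨h1, h2, h3, h4, h5⟩ := hρ hz'
    have hden : (0 : ℝ) < 4 * (‖F z‖) ^ 2 *
        (1 - (‖deriv F z‖) ^ 2) ^ 2 := by
      have ht : (1 : ℝ) - (‖deriv F z‖) ^ 2 ≠ 0 := by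
        intro H
        have hsq : (‖deriv F z‖) ^ 2 = 1 := by linarith
        have : (‖deriv F z‖ - 1) * (‖deriv F z‖ + 1) = 0 := by
          nlinarith
        rcases mul_eq_zero.mp this with h | h
        · exact h3 (by linarith)
        · have := norm_nonneg (deriv F z); linarith
      have h4pos : (0:ℝ) < (1 - (‖deriv F z‖) ^ 2) ^ 2 :=
        lt_of_le_of_ne (sq_nonneg _) (Ne.symm (pow_ne_zero 2 ht))
      exact mul_pos (mul_pos (by norm_num) (pow_pos (norm_pos_iff.mpr h1) 2)) h4pos
    refine ⟨gaussK_eq_aux F z h2,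
      div_pos (pow_pos (norm_pos_iff.mpr h2) 4) hden, ?_⟩
    rw [h4]; simp [smul_eq_mul]
  refine ⟨?_, ?_⟩
  · -- gaussK F 0 = 0
    rw [gaussK, hF''0]
    have : 2 * F 0 * 0 - (deriv F 0) ^ 2 = -((deriv F 0) ^ 2) := by ring
    rw [this, norm_neg, norm_pow, ← pow_mul]
    norm_num
  · intro δ hδ
    -- choose a radius
    set r : ℝ := min (min (δ / 2) (ρ / 2)) (min (1 / 2) (1 / (3 * ra))) with hrdef
    have h13 : (0:ℝ) < 1 / (3 * ra) := by
      apply div_pos one_pos; linarith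
    have hrpos : 0 < r :=
      lt_min (lt_min (by linarith) (by linarith)) (lt_min (by norm_num) h13)
    have hrδ : r < δ := lt_of_le_of_lt (le_trans (min_le_left _ _) (min_le_left _ _)) (by linarith)
    have hrρ : r < ρ := lt_of_le_of_lt (le_trans (min_le_left _ _) (min_le_right _ _)) (by linarith)
    have hr1 : r ≤ 1 / 2 := le_trans (min_le_right _ _) (min_le_left _ _)
    have hr3 : r ≤ 1 / (3 * ra) := le_trans (min_le_right _ _) (min_le_right _ _)
    have hrn_le : r ^ n ≤ r := by
      calc r ^ n ≤ r ^ 1 := pow_le_pow_of_le_one hrpos.le (by linarith) (Nat.one_le_iff_ne_zero.mpr hn)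
      _ = r := pow_one r
    have hrnpos : 0 < r ^ n := pow_pos hrpos n
    clear hrdef
    clear_value r
    -- positive curvature point : a z^n = -ra r^n
    obtain ⟨zp, hzpabs, hzpval⟩ := exists_point_aux a hg0 hn hrpos (-1) (by norm_num)
    -- negative curvature point : a z^n = ra r^n
    obtain ⟨zm, hzmabs, hzmval⟩ := exists_point_aux a hg0 hn hrpos 1 (by norm_num)
    -- basic estimates shared by both points
    have key : ∀ z : ℂ, ‖z‖ = r → ∀ s : ℝ,
        a * z ^ n = ((s * ra * r ^ n : ℝ) : ℂ) → |s| = 1 →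
        q z = z ^ n * g z ∧
        |(q z).re - s * ra * r ^ n| ≤ ra / 2 * r ^ n ∧
        ‖q z‖ ≤ 3 / 2 * ra * r ^ n := by
      intro z hzabs s hzval hs
      have hzρ : ‖z‖ < ρ := by rw [hzabs]; exact hrρ
      have hz' : dist z 0 < ρ := by rwa [Complex.dist_eq, sub_zero]
      obtain ⟨h1, h2, h3, h4, h5⟩ := hρ hz'
      have hqz : q z = z ^ n * g z := by rw [h4]; simp [smul_eq_mul]
      have hzn : ‖z ^ n‖ = r ^ n := by rw [norm_pow, hzabs]
      have hsplit : q z = ((s * ra * r ^ n : ℝ) : ℂ) + z ^ n * (g z - a) := by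
        rw [hqz, ← hzval]; ring
      constructor
      · exact hqz
      constructor
      · have : (q z).re - s * ra * r ^ n = (z ^ n * (g z - a)).re := by
          rw [hsplit]; simp only [Complex.add_re, Complex.ofReal_re]; ring
        rw [this]
        calc |(z ^ n * (g z - a)).re| ≤ ‖z ^ n * (g z - a)‖ :=
              Complex.abs_re_le_norm _
        _ = r ^ n * ‖g z - a‖ := by rw [norm_mul, hzn]
        _ ≤ r ^ n * (ra / 2) := by
              exact mul_le_mul_of_nonneg_left h5.le hrnpos.le
        _ = ra / 2 * r ^ n := by ring
      · calc ‖q z‖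
            ≤ ‖((s * ra * r ^ n : ℝ) : ℂ)‖ + ‖z ^ n * (g z - a)‖ := by
              rw [hsplit]; exact norm_add_le _ _
        _ ≤ ra * r ^ n + r ^ n * (ra / 2) := by
              apply add_le_add
              · rw [Complex.norm_real, Real.norm_eq_abs, abs_mul, abs_mul, hs, one_mul,
                  abs_of_pos hrapos, abs_of_pos hrnpos]
              · rw [norm_mul, norm_pow, hzabs]
                exact mul_le_mul_of_nonneg_left h5.le hrnpos.le
        _ = 3 / 2 * ra * r ^ n := by ring
    obtain ⟨hqzp, hrep, _⟩ := key zp hzpabs (-1) hzpval (by norm_num)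
    obtain ⟨hqzm, hrem, habsm⟩ := key zm hzmabs 1 hzmval (by norm_num)
    have hzpρ : ‖zp‖ < ρ := by rw [hzpabs]; exact hrρ
    have hzmρ : ‖zm‖ < ρ := by rw [hzmabs]; exact hrρ
    obtain ⟨heqp, hcp, _⟩ := hsign zp hzpρ
    obtain ⟨heqm, hcm, _⟩ := hsign zm hzmρ
    refine ⟨zp, zm, by rw [hzpabs]; exact hrpos, by rw [hzpabs]; exact hrδ,
      by rw [hzmabs]; exact hrpos, by rw [hzmabs]; exact hrδ, ?_, ?_⟩
    · -- positive curvature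
      rw [heqp]
      apply mul_pos hcp
      have hre : (q zp).re ≤ -(ra / 2 * r ^ n) := by
        have h := (abs_le.mp hrep).2
        linarith
      have hnn := Complex.normSq_nonneg (q zp)
      have hprod : 0 < ra / 2 * r ^ n := mul_pos (by linarith) hrnpos
      linarith
    · -- negative curvature
      rw [heqm]
      have hQ : Complex.normSq (q zm) - 2 * (q zm).re < 0 := by
        have hre : ra / 2 * r ^ n ≤ (q zm).re := by
          have h := (abs_le.mp hrem).1
          linarith
        have hns : Complex.normSq (q zm) ≤ (3 / 2 * ra * r ^ n) ^ 2 := by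
          rw [← Complex.sq_norm]
          exact pow_le_pow_left₀ (norm_nonneg _) habsm 2
        -- r^n ≤ r ≤ 1/(3 ra)  so  (3/2 ra r^n)^2 ≤ (3/2 ra r^n) * (1/2) ... 
        have hsmall : 3 * ra * r ^ n ≤ 1 := by
          have h1 : r ^ n ≤ 1 / (3 * ra) := le_trans hrn_le hr3
          have h2 : (0:ℝ) < 3 * ra := by positivity
          calc 3 * ra * r ^ n ≤ 3 * ra * (1 / (3 * ra)) :=
                mul_le_mul_of_nonneg_left h1 h2.le
          _ = 1 := by field_simp
        have hprod : 0 < ra * r ^ n := mul_pos hrapos hrnpos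
        nlinarith [hprod, hsmall, hns, hre]
      have := mul_neg_of_pos_of_neg hcm hQ
      linarith
end

section
/- Let F be holomorphic and non-constant on a connected open neighbourhood of 0 in ℂ with F(0) ≠ 0 and F'(0) = F''(0) = 0. Then K(0) = 0, and there exists δ > 0 such that K(z) > 0 for all z with 0 < |z| < δ. -/
open Topology Filter


/-- If `F` is holomorphic and non-constant on a connected open neighbourhood of `0`
with `F(0) ≠ 0` and `F'(0) = F''(0) = 0`, then `K(0) = 0` and the Gaussian curvature
is positive on some punctured neighbourhood of `0`. -/
theorem gaussK_pos_near_of_F'_F''_zero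
    (U : Set ℂ) (hU : IsOpen U) (hUconn : IsConnected U) (h0U : (0 : ℂ) ∈ U)
    (F : ℂ → ℂ) (hF : DifferentiableOn ℂ F U)
    (hnc : ∃ z ∈ U, F z ≠ F 0)
    (hF0 : F 0 ≠ 0) (hF'0 : deriv F 0 = 0) (hF''0 : deriv (deriv F) 0 = 0) :
    gaussK F 0 = 0 ∧
      ∃ δ > (0 : ℝ), ∀ z : ℂ, 0 < ‖z‖ → ‖z‖ < δ →
        0 < gaussK F z := by
  have hFa : AnalyticOnNhd ℂ F U := hF.analyticOnNhd hU
  have hG : AnalyticAt ℂ (deriv F) 0 := hFa.deriv 0 h0U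
  refine ⟨by simp [gaussK, hF'0, hF''0], ?_⟩
  -- the order of `deriv F` at 0 is finite
  have htop : analyticOrderAt (deriv F) 0 ≠ ⊤ := by
    intro htop
    rw [analyticOrderAt_eq_top] at htop
    -- `deriv F` vanishes near 0, so `F` is locally constant, hence constant on `U`
    obtain ⟨r, hr0, hball⟩ :=
      Metric.mem_nhds_iff.mp (Filter.inter_mem htop (hU.mem_nhds h0U))
    have hconst : ∀ y ∈ Metric.ball (0 : ℂ) r, F y = F 0 := by
      intro y hy
      have hdiff : DifferentiableOn ℂ F (Metric.ball (0 : ℂ) r) :=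
        hF.mono fun x hx => (hball hx).2
      have hfd : ∀ x ∈ Metric.ball (0 : ℂ) r,
          fderivWithin ℂ F (Metric.ball (0 : ℂ) r) x = 0 := by
        intro x hx
        rw [fderivWithin_of_isOpen Metric.isOpen_ball hx]
        have hdx : DifferentiableAt ℂ F x :=
          (hF.differentiableAt (hU.mem_nhds (hball hx).2))
        have h0 : HasDerivAt F 0 x := by
          have := hdx.hasDerivAt
          rwa [(hball hx).1] at this
        rw [h0.hasFDerivAt.fderiv]
        ext
        simp
      exact (Convex.is_const_of_fderivWithin_eq_zero (convex_ball 0 r) hdiff hfd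
        (Metric.mem_ball_self hr0) hy).symm
    have heq : Set.EqOn F (fun _ => F 0) U := by
      apply hFa.eqOn_of_preconnected_of_eventuallyEq analyticOnNhd_const
        hUconn.isPreconnected h0U
      filter_upwards [Metric.ball_mem_nhds (0 : ℂ) hr0] with y hy using hconst y hy
    obtain ⟨z, hzU, hz⟩ := hnc
    exact hz (heq hzU)
  lift analyticOrderAt (deriv F) 0 to ℕ using htop with n hn
  obtain ⟨g, hg_an, hg0, hev⟩ := (hG.analyticOrderAt_eq_natCast (n := n)).mp hn.symm
  -- n ≥ 1
  obtain ⟨m, rfl⟩ : ∃ m, n = m + 1 := by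
    have hn0 : n ≠ 0 := by
      rintro rfl
      have := hev.self_of_nhds
      simp [hF'0] at this
      exact hg0 this.symm
    exact ⟨n - 1, by omega⟩
  -- choose a ball where everything is nice
  have hgan_ev : ∀ᶠ z in 𝓝 (0 : ℂ), AnalyticAt ℂ g z := hg_an.eventually_analyticAt
  obtain ⟨r, hr0, hball⟩ := Metric.mem_nhds_iff.mp
    (Filter.inter_mem hev hgan_ev)
  -- the derivative of `deriv F` on the ball
  set H : ℂ → ℂ := fun z =>
    2 * F z * (((m : ℂ) + 1) * g z + z * deriv g z) - z ^ (m + 2) * (g z) ^ 2 with hH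
  have key : ∀ z ∈ Metric.ball (0 : ℂ) r,
      2 * F z * deriv (deriv F) z - (deriv F z) ^ 2 = z ^ m * H z := by
    intro z hz
    have h1 : deriv F z = z ^ (m + 1) * g z := by
      have := (hball hz).1; simpa using this
    have h2 : deriv (deriv F) z
        = ((m : ℂ) + 1) * z ^ m * g z + z ^ (m + 1) * deriv g z := by
      have heq : deriv F =ᶠ[𝓝 z] fun w => w ^ (m + 1) * g w := by
        filter_upwards [Metric.isOpen_ball.mem_nhds hz] with w hw
        have := (hball hw).1; simpa using this
      rw [heq.deriv_eq]
      have hgz : DifferentiableAt ℂ g z := (hball hz).2.differentiableAt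
      have := ((hasDerivAt_pow (m + 1) z).mul hgz.hasDerivAt).deriv
      rw [show (fun w => w ^ (m + 1) * g w) = (fun x : ℂ => x ^ (m + 1)) * g from rfl, this]
      push_cast
      ring
    rw [h1, h2, hH]
    ring
  have hHcont : ContinuousAt H 0 := by
    have hFc : ContinuousAt F 0 := (hFa 0 h0U).continuousAt
    have hgc : ContinuousAt g 0 := hg_an.continuousAt
    obtain ⟨s, hs_nhds, hs_an⟩ := hg_an.eventually_analyticAt.exists_mem
    have hgan_on : AnalyticOnNhd ℂ g s := fun x hx => hs_an x hx
    have hgc' : ContinuousAt (deriv g) 0 :=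
      (hgan_on.deriv 0 (mem_of_mem_nhds hs_nhds)).continuousAt
    fun_prop
  have hH0 : H 0 ≠ 0 := by
    have : H 0 = 2 * F 0 * (((m : ℂ) + 1) * g 0) := by
      simp [hH]
    rw [this]
    apply mul_ne_zero (mul_ne_zero two_ne_zero hF0)
    apply mul_ne_zero _ hg0
    have : ((m + 1 : ℕ) : ℂ) ≠ 0 := Nat.cast_ne_zero.mpr (Nat.succ_ne_zero m)
    push_cast at this
    exact this
  set c : ℝ := ‖H 0‖ with hc
  have hc0 : 0 < c := hc ▸ norm_pos_iff.mpr hH0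
  -- the eventual statement
  have hev2 : ∀ᶠ z in 𝓝 (0 : ℂ),
      z ∈ Metric.ball (0 : ℂ) r ∧ c / 2 < ‖H z‖ ∧
      (‖z‖) ^ (m + 2) * (‖g z‖) ^ 2 < c / 2 ∧
      F z ≠ 0 ∧ ‖deriv F z‖ < 1 := by
    have e1 : ∀ᶠ z in 𝓝 (0 : ℂ), z ∈ Metric.ball (0 : ℂ) r :=
      Metric.ball_mem_nhds _ hr0
    have e2 : ∀ᶠ z in 𝓝 (0 : ℂ), c / 2 < ‖H z‖ := by
      have hcont2 : ContinuousAt (fun z => ‖H z‖) 0 :=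
        continuous_norm.continuousAt.comp hHcont
      have hlt : c / 2 < (fun z => ‖H z‖) 0 := half_lt_self hc0
      exact hcont2.eventually (eventually_gt_nhds hlt)
    have e3 : ∀ᶠ z in 𝓝 (0 : ℂ),
        (‖z‖) ^ (m + 2) * (‖g z‖) ^ 2 < c / 2 := by
      have hcont : ContinuousAt
          (fun z => (‖z‖) ^ (m + 2) * (‖g z‖) ^ 2) 0 :=
        (continuous_norm.continuousAt.pow _).mul
          ((continuous_norm.continuousAt.comp hg_an.continuousAt).pow _)
      have h0lt : (fun z => (‖z‖) ^ (m + 2) * (‖g z‖) ^ 2) 0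
          < c / 2 := by
        simp only [norm_zero]
        rw [zero_pow (by omega), zero_mul]
        positivity
      exact hcont.eventually (eventually_lt_nhds h0lt)
    have e4 : ∀ᶠ z in 𝓝 (0 : ℂ), F z ≠ 0 :=
      (hFa 0 h0U).continuousAt.eventually_ne hF0
    have e5 : ∀ᶠ z in 𝓝 (0 : ℂ), ‖deriv F z‖ < 1 := by
      have hcont5 : ContinuousAt (fun z => ‖deriv F z‖) 0 :=
        continuous_norm.continuousAt.comp hG.continuousAt
      have h0lt : (fun z => ‖deriv F z‖) 0 < 1 := by simp [hF'0]
      exact hcont5.eventually (eventually_lt_nhds h0lt)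
    filter_upwards [e1, e2, e3, e4, e5] with z h1 h2 h3 h4 h5
    exact ⟨h1, h2, h3, h4, h5⟩
  obtain ⟨δ, hδ0, hδ⟩ := Metric.eventually_nhds_iff_ball.mp hev2
  refine ⟨δ, hδ0, fun z hz0 hzδ => ?_⟩
  have hzball : z ∈ Metric.ball (0 : ℂ) δ := by
    rw [Metric.mem_ball, Complex.dist_eq, sub_zero]; exact hzδ
  obtain ⟨hzr, hHz, hsmall, hFz, hdF1⟩ := hδ z hzball
  have hzne : z ≠ 0 := by
    intro h; rw [h] at hz0; simp at hz0
  -- compute the two absolute values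
  have h1 : deriv F z = z ^ (m + 1) * g z := by
    have := (hball hzr).1; simpa using this
  have habsA : ‖deriv F z‖
      = (‖z‖) ^ (m + 1) * ‖g z‖ := by
    rw [h1, norm_mul, norm_pow]
  have habsB : ‖2 * F z * deriv (deriv F) z - (deriv F z) ^ 2‖
      = (‖z‖) ^ m * ‖H z‖ := by
    rw [key z hzr, norm_mul, norm_pow]
  -- numerator comparison
  have hA4 : (‖deriv F z‖) ^ 4
      = ((‖z‖) ^ m) ^ 2
        * ((‖z‖) ^ (m + 2) * (‖g z‖) ^ 2) ^ 2 := by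
    rw [habsA]; ring
  have hzpos : 0 < ‖z‖ := hz0
  have hlt : (‖deriv F z‖) ^ 4
      < (‖2 * F z * deriv (deriv F) z - (deriv F z) ^ 2‖) ^ 2 := by
    have hlt' : (‖z‖) ^ (m + 2) * (‖g z‖) ^ 2
        < ‖H z‖ := lt_trans hsmall hHz
    have h2 : ((‖z‖) ^ (m + 2) * (‖g z‖) ^ 2) ^ 2
        < (‖H z‖) ^ 2 :=
      pow_lt_pow_left₀ hlt' (by positivity) two_ne_zero
    have hP : (0 : ℝ) < ((‖z‖) ^ m) ^ 2 := pow_pos (pow_pos hzpos m) 2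
    calc (‖deriv F z‖) ^ 4
        = ((‖z‖) ^ m) ^ 2
          * ((‖z‖) ^ (m + 2) * (‖g z‖) ^ 2) ^ 2 := hA4
      _ < ((‖z‖) ^ m) ^ 2 * (‖H z‖) ^ 2 :=
          mul_lt_mul_of_pos_left h2 hP
      _ = ((‖z‖) ^ m * ‖H z‖) ^ 2 := by ring
      _ = (‖2 * F z * deriv (deriv F) z - (deriv F z) ^ 2‖) ^ 2 := by
          rw [habsB]
  -- denominator positivity
  have hFzabs : 0 < ‖F z‖ := norm_pos_iff.mpr hFz
  have hden : 0 < 4 * (‖F z‖) ^ 2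
      * (1 - (‖deriv F z‖) ^ 2) ^ 2 := by
    have h2 : (‖deriv F z‖) ^ 2 < 1 := by
      have := hdF1
      nlinarith [norm_nonneg (deriv F z)]
    have : 0 < 1 - (‖deriv F z‖) ^ 2 := by linarith
    positivity
  rw [gaussK, neg_sub, div_pos_iff]
  left
  exact ⟨sub_pos.mpr hlt, hden⟩
end

section
/- Let n ≥ 3 and let F be holomorphic on an open neighbourhood of 0 in ℂ with F(0) = F'(0) = F''(0) = ⋯ = F⁽ⁿ⁻¹⁾(0) = 0 and F⁽ⁿ⁾(0) ≠ 0 (i.e., F has a zero of order n ≥ 3 at 0). Then there exists δ > 0 such that for all z with 0 < |z| < δ one has F(z) ≠ 0, |F'(z)| ≠ 1, and K(z) < 0. -/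
open Filter Function Topology

private lemma analyticAt_deriv' {f : ℂ → ℂ} {x : ℂ} (h : AnalyticAt ℂ f x) :
    AnalyticAt ℂ (deriv f) x :=
  ((ContinuousLinearMap.apply ℂ ℂ (1 : ℂ)).analyticAt (fderiv ℂ f x)).comp h.fderiv

private lemma coeff_key {F : ℂ → ℂ} {p : FormalMultilinearSeries ℂ ℂ ℂ}
    (hp : HasFPowerSeriesAt F p 0) (m : ℕ) :
    (m.factorial : ℂ) * p.coeff m = iteratedDeriv m F 0 := by
  obtain ⟨r, hr⟩ := hp
  have h1 := hr.factorial_smul (1 : ℂ) m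
  rw [iteratedDeriv_eq_iteratedFDeriv, ← h1, FormalMultilinearSeries.coeff,
    nsmul_eq_mul, Pi.one_def]


/-- If `F` has a zero of order `n ≥ 3` at `0`, then near `0` (in a punctured
neighbourhood) one has `F ≠ 0`, `|F'| ≠ 1` and negative Gaussian curvature. -/
theorem gaussK_neg_near_of_zero_order_ge_three
    (n : ℕ) (hn3 : 3 ≤ n)
    (U : Set ℂ) (hU : IsOpen U) (h0U : (0 : ℂ) ∈ U)
    (F : ℂ → ℂ) (hF : DifferentiableOn ℂ F U)
    (hzero : ∀ k < n, iteratedDeriv k F 0 = 0)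
    (hn : iteratedDeriv n F 0 ≠ 0) :
    ∃ δ > (0 : ℝ), ∀ z : ℂ, 0 < ‖z‖ → ‖z‖ < δ →
      F z ≠ 0 ∧ ‖deriv F z‖ ≠ 1 ∧ gaussK F z < 0 := by
  obtain ⟨k, rfl⟩ : ∃ k, n = k + 3 := ⟨n - 3, by omega⟩
  have hFa : AnalyticAt ℂ F 0 := hF.analyticAt (hU.mem_nhds h0U)
  obtain ⟨p, hp⟩ := hFa
  -- vanishing coefficients
  have hck : ∀ m < k + 3, p m = 0 := by
    intro m hm
    have h1 := coeff_key hp m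
    rw [hzero m hm, mul_eq_zero] at h1
    rcases h1 with h1 | h1
    · exact absurd h1 (Nat.cast_ne_zero.mpr m.factorial_ne_zero)
    · exact FormalMultilinearSeries.coeff_eq_zero.mp h1
  have hpn : p (k + 3) ≠ 0 := by
    intro h1
    apply hn
    rw [← coeff_key hp (k + 3), FormalMultilinearSeries.coeff_eq_zero.mpr h1, mul_zero]
  have hp0 : p ≠ 0 := fun h => hpn (by simp [h])
  have horder : p.order = k + 3 := by
    have h1 : p.order ≤ k + 3 := Nat.sInf_le hpn
    rcases lt_or_eq_of_le h1 with h | h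
    · exact absurd (hck _ h) (p.apply_order_ne_zero hp0)
    · exact h
  -- the analytic unit g
  set g : ℂ → ℂ := (Function.swap dslope 0)^[k + 3] F with hgdef
  have hgps := hp.has_fpower_series_iterate_dslope_fslope (k + 3)
  have hg : AnalyticAt ℂ g 0 := ⟨_, hgps⟩
  have hg0 : g 0 ≠ 0 := by
    have := hp.iterate_dslope_fslope_ne_zero hp0
    rwa [horder] at this
  have hEq : F =ᶠ[𝓝 (0 : ℂ)] fun z => z ^ (k + 3) * g z := by
    have h1 := hp.eq_pow_order_mul_iterate_dslope
    rw [horder] at h1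
    refine Filter.Eventually.of_forall fun z => ?_
    have hz := h1 z
    simpa only [smul_eq_mul, sub_zero] using hz
  have hg' : AnalyticAt ℂ (deriv g) 0 := analyticAt_deriv' hg
  have hg'' : AnalyticAt ℂ (deriv (deriv g)) 0 := analyticAt_deriv' hg'
  set P : ℂ → ℂ := fun z => ((k : ℂ) + 3) * g z + z * deriv g z with hPdef
  set R : ℂ → ℂ := fun z =>
    ((k : ℂ) + 3) * ((k : ℂ) + 2) * g z + 2 * ((k : ℂ) + 3) * z * deriv g z
      + z ^ 2 * deriv (deriv g) z with hRdef
  set Q : ℂ → ℂ := fun z => 2 * g z * R z - (P z) ^ 2 with hQdef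
  -- first derivative
  have hDF : deriv F =ᶠ[𝓝 (0 : ℂ)] fun z => z ^ (k + 2) * P z := by
    filter_upwards [hEq.deriv, hg.eventually_analyticAt] with z h2 h3
    rw [h2, show (fun z => z ^ (k + 3) * g z) = (fun x => x ^ (k + 3)) * g from rfl, ((hasDerivAt_pow (k + 3) z).mul h3.differentiableAt.hasDerivAt).deriv]
    show (↑(k + 3) * z ^ (k + 3 - 1)) * g z + z ^ (k + 3) * deriv g z
        = z ^ (k + 2) * (((k : ℂ) + 3) * g z + z * deriv g z)
    have : k + 3 - 1 = k + 2 := rfl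
    rw [this]
    push_cast
    ring
  -- second derivative
  have hDDF : deriv (deriv F) =ᶠ[𝓝 (0 : ℂ)] fun z => z ^ (k + 1) * R z := by
    filter_upwards [hDF.deriv, hg.eventually_analyticAt, hg'.eventually_analyticAt]
      with z h2 h3 h4
    rw [h2]
    have hPd : HasDerivAt P
        (((k : ℂ) + 3) * deriv g z + (1 * deriv g z + z * deriv (deriv g) z)) z := by
      exact (h3.differentiableAt.hasDerivAt.const_mul ((k : ℂ) + 3)).add
        ((hasDerivAt_id' (x := z)).mul h4.differentiableAt.hasDerivAt)
    rw [show (fun z => z ^ (k + 2) * P z) = (fun x => x ^ (k + 2)) * P from rfl, ((hasDerivAt_pow (k + 2) z).mul hPd).deriv]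
    show (↑(k + 2) * z ^ (k + 2 - 1)) * P z
        + z ^ (k + 2) * (((k : ℂ) + 3) * deriv g z + (1 * deriv g z + z * deriv (deriv g) z))
        = z ^ (k + 1) * R z
    have : k + 2 - 1 = k + 1 := rfl
    rw [this, hPdef, hRdef]
    push_cast
    ring
  -- continuity data
  have hgc : ContinuousAt g 0 := hg.continuousAt
  have hg'c : ContinuousAt (deriv g) 0 := hg'.continuousAt
  have hg''c : ContinuousAt (deriv (deriv g)) 0 := hg''.continuousAt
  have hPc : ContinuousAt P 0 :=
    (continuousAt_const.mul hgc).add (continuousAt_id.mul hg'c)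
  have hRc : ContinuousAt R 0 :=
    ((continuousAt_const.mul hgc).add
      ((continuousAt_const.mul continuousAt_id).mul hg'c)).add
      ((continuousAt_id.pow 2).mul hg''c)
  have hQc : ContinuousAt Q 0 :=
    ((continuousAt_const.mul hgc).mul hRc).sub (hPc.pow 2)
  set f : ℂ → ℝ := fun z => (‖P z‖) ^ 4 - (‖Q z‖) ^ 2 with hfdef
  have hfc : ContinuousAt f 0 :=
    ((continuous_norm.continuousAt.comp hPc).pow 4).sub
      ((continuous_norm.continuousAt.comp hQc).pow 2)
  -- value at 0
  have hP0 : P 0 = ((k : ℂ) + 3) * g 0 := by simp [hPdef]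
  have hQ0 : Q 0 = (((k : ℂ) + 3) * ((k : ℂ) + 1)) * (g 0) ^ 2 := by
    simp only [hQdef, hRdef, hPdef]
    ring
  have habsg : 0 < ‖g 0‖ := norm_pos_iff.mpr hg0
  have hf0 : 0 < f 0 := by
    have e1 : ‖P 0‖ = ((k : ℝ) + 3) * ‖g 0‖ := by
      rw [hP0, norm_mul]
      congr 1
      have : ((k : ℂ) + 3) = ((k + 3 : ℕ) : ℂ) := by push_cast; ring
      rw [this, Complex.norm_natCast]
      push_cast; ring
    have e2 : ‖Q 0‖ =
        (((k : ℝ) + 3) * ((k : ℝ) + 1)) * (‖g 0‖) ^ 2 := by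
      rw [hQ0, norm_mul, norm_mul, norm_pow]
      congr 2
      · have : ((k : ℂ) + 3) = ((k + 3 : ℕ) : ℂ) := by push_cast; ring
        rw [this, Complex.norm_natCast]; push_cast; ring
      · have : ((k : ℂ) + 1) = ((k + 1 : ℕ) : ℂ) := by push_cast; ring
        rw [this, Complex.norm_natCast]; push_cast; ring
    show 0 < (‖P 0‖) ^ 4 - (‖Q 0‖) ^ 2
    rw [e1, e2]
    have hk0 : (0 : ℝ) ≤ (k : ℝ) := Nat.cast_nonneg k
    nlinarith [pow_pos habsg 4, pow_pos habsg 2, sq_nonneg ((k : ℝ))]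
  -- eventual facts
  have E4 : ∀ᶠ z in 𝓝 (0 : ℂ), g z ≠ 0 := hgc.eventually_ne hg0
  have E5 : ∀ᶠ z in 𝓝 (0 : ℂ), 0 < f z := hfc.eventually (eventually_gt_nhds hf0)
  have E6 : ∀ᶠ z in 𝓝 (0 : ℂ), ‖z ^ (k + 2) * P z‖ < 1 := by
    have hc : ContinuousAt (fun z : ℂ => ‖z ^ (k + 2) * P z‖) 0 :=
      continuous_norm.continuousAt.comp ((continuousAt_id.pow (k + 2)).mul hPc)
    have h0 : ‖(0 : ℂ) ^ (k + 2) * P 0‖ = 0 := by simp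
    have := hc.eventually (eventually_lt_nhds (by rw [h0] at *; norm_num : ‖(0 : ℂ) ^ (k + 2) * P 0‖ < 1))
    exact this
  have main : ∀ᶠ z in 𝓝 (0 : ℂ), z ≠ 0 →
      (F z ≠ 0 ∧ ‖deriv F z‖ ≠ 1 ∧ gaussK F z < 0) := by
    filter_upwards [hEq, hDF, hDDF, E4, E5, E6] with z h1 h2 h3 h4 h5 h6 hz
    have hFz : F z ≠ 0 := by
      rw [h1]; exact mul_ne_zero (pow_ne_zero _ hz) h4
    have habs1 : ‖deriv F z‖ < 1 := by rw [h2]; exact h6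
    refine ⟨hFz, ne_of_lt habs1, ?_⟩
    have hb : 2 * F z * deriv (deriv F) z - (deriv F z) ^ 2
        = z ^ (2 * k + 4) * Q z := by
      rw [h1, h2, h3, hQdef]
      ring
    have hnum : (‖deriv F z‖) ^ 4 -
        (‖2 * F z * deriv (deriv F) z - (deriv F z) ^ 2‖) ^ 2
        = (‖z‖) ^ (4 * k + 8) * f z := by
      rw [hb, h2, norm_mul, norm_mul, norm_pow, norm_pow, hfdef]
      ring
    have hzpos : 0 < ‖z‖ := norm_pos_iff.mpr hz
    have hnumpos : 0 < (‖deriv F z‖) ^ 4 -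
        (‖2 * F z * deriv (deriv F) z - (deriv F z) ^ 2‖) ^ 2 := by
      rw [hnum]; exact mul_pos (pow_pos hzpos _) h5
    have hden : 0 < 4 * (‖F z‖) ^ 2 *
        (1 - (‖deriv F z‖) ^ 2) ^ 2 := by
      have h7 : (‖deriv F z‖) ^ 2 < 1 :=
        pow_lt_one₀ (norm_nonneg _) habs1 two_ne_zero
      have h8 : 0 < ‖F z‖ := norm_pos_iff.mpr hFz
      have := sub_pos.mpr h7
      positivity
    rw [gaussK]
    exact div_neg_of_neg_of_pos (neg_lt_zero.mpr hnumpos) hden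
  rw [Metric.eventually_nhds_iff] at main
  obtain ⟨ε, hε, hball⟩ := main
  refine ⟨ε, hε, fun z hz1 hz2 => ?_⟩
  have hd : dist z 0 < ε := by rwa [Complex.dist_eq, sub_zero]
  exact hball hd (norm_pos_iff.mp hz1)
end

section
/- Let U ⊆ ℝ² be a nonempty connected open set. There is no smooth positive function h : U → ℝ satisfying simultaneously h·(h_xx + h_yy) = h_x² + h_y² on U, h_x² + h_y² > 1 on U (the graph is timelike), and the zero mean curvature equation (1 − h_y²)·h_xx + 2·h_x·h_y·h_xy + (1 − h_x²)·h_yy = 0 on U. In other words, there are no timelike minimal modular surfaces in Lorentz–Minkowski 3-space. -/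
/-- Partial derivative in the `x` direction. -/
noncomputable def pdx (f : ℝ × ℝ → ℝ) (p : ℝ × ℝ) : ℝ := fderiv ℝ f p (1, 0)

/-- Partial derivative in the `y` direction. -/
noncomputable def pdy (f : ℝ × ℝ → ℝ) (p : ℝ × ℝ) : ℝ := fderiv ℝ f p (0, 1)





section Tools
variable {U : Set (ℝ × ℝ)} {f g : ℝ × ℝ → ℝ} {q : ℝ × ℝ}

theorem pdx_sm (hU : IsOpen U) (hf : ContDiffOn ℝ (⊤ : ℕ∞) f U) : ContDiffOn ℝ (⊤ : ℕ∞) (pdx f) U :=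
  (hf.fderiv_of_isOpen hU (by simp)).clm_apply contDiffOn_const

theorem pdy_sm (hU : IsOpen U) (hf : ContDiffOn ℝ (⊤ : ℕ∞) f U) : ContDiffOn ℝ (⊤ : ℕ∞) (pdy f) U :=
  (hf.fderiv_of_isOpen hU (by simp)).clm_apply contDiffOn_const

theorem dAt (hU : IsOpen U) (hf : ContDiffOn ℝ (⊤ : ℕ∞) f U) (hq : q ∈ U) : DifferentiableAt ℝ f q :=
  (hf.contDiffAt (hU.mem_nhds hq)).differentiableAt (by simp)

theorem pdx_congrU (hU : IsOpen U) (hfg : ∀ x ∈ U, f x = g x) (hq : q ∈ U) :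
    pdx f q = pdx g q := by
  unfold pdx
  rw [Filter.EventuallyEq.fderiv_eq (Filter.eventuallyEq_of_mem (hU.mem_nhds hq) hfg)]

theorem pdy_congrU (hU : IsOpen U) (hfg : ∀ x ∈ U, f x = g x) (hq : q ∈ U) :
    pdy f q = pdy g q := by
  unfold pdy
  rw [Filter.EventuallyEq.fderiv_eq (Filter.eventuallyEq_of_mem (hU.mem_nhds hq) hfg)]

theorem pdx_add (hf : DifferentiableAt ℝ f q) (hg : DifferentiableAt ℝ g q) :
    pdx (fun x => f x + g x) q = pdx f q + pdx g q := by
  unfold pdx; rw [fderiv_fun_add hf hg]; rfl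

theorem pdy_add (hf : DifferentiableAt ℝ f q) (hg : DifferentiableAt ℝ g q) :
    pdy (fun x => f x + g x) q = pdy f q + pdy g q := by
  unfold pdy; rw [fderiv_fun_add hf hg]; rfl

theorem pdx_mul (hf : DifferentiableAt ℝ f q) (hg : DifferentiableAt ℝ g q) :
    pdx (fun x => f x * g x) q = f q * pdx g q + g q * pdx f q := by
  unfold pdx; rw [fderiv_fun_mul hf hg]; simp

theorem pdy_mul (hf : DifferentiableAt ℝ f q) (hg : DifferentiableAt ℝ g q) :
    pdy (fun x => f x * g x) q = f q * pdy g q + g q * pdy f q := by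
  unfold pdy; rw [fderiv_fun_mul hf hg]; simp

theorem pdx_sq (hf : DifferentiableAt ℝ f q) :
    pdx (fun x => f x ^ 2) q = 2 * f q * pdx f q := by
  have e : (fun x => f x ^ 2) = fun x => f x * f x := by funext x; ring
  rw [e, pdx_mul hf hf]; ring

theorem pdy_sq (hf : DifferentiableAt ℝ f q) :
    pdy (fun x => f x ^ 2) q = 2 * f q * pdy f q := by
  have e : (fun x => f x ^ 2) = fun x => f x * f x := by funext x; ring
  rw [e, pdy_mul hf hf]; ring

theorem pdx_cmul (c : ℝ) (hf : DifferentiableAt ℝ f q) :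
    pdx (fun x => c * f x) q = c * pdx f q := by
  unfold pdx; rw [fderiv_const_mul hf]; simp

theorem pdy_cmul (c : ℝ) (hf : DifferentiableAt ℝ f q) :
    pdy (fun x => c * f x) q = c * pdy f q := by
  unfold pdy; rw [fderiv_const_mul hf]; simp

theorem pdx_const (c : ℝ) : pdx (fun _ => c) q = 0 := by
  unfold pdx; rw [fderiv_fun_const]; rfl

theorem pdy_const (c : ℝ) : pdy (fun _ => c) q = 0 := by
  unfold pdy; rw [fderiv_fun_const]; rfl

theorem pdxy_comm (hU : IsOpen U) (hf : ContDiffOn ℝ (⊤ : ℕ∞) f U) (hq : q ∈ U) :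
    pdx (pdy f) q = pdy (pdx f) q := by
  have hsym := (hf.contDiffAt (hU.mem_nhds hq)).isSymmSndFDerivAt (by rw [minSmoothness_of_isRCLikeNormedField]; exact WithTop.coe_le_coe.mpr le_top)
  have hdf : DifferentiableAt ℝ (fderiv ℝ f) q :=
    (((hf.fderiv_of_isOpen (m := (⊤ : ℕ∞)) hU (by simp))).contDiffAt (hU.mem_nhds hq)).differentiableAt (by simp)
  have h1 : pdx (pdy f) q = fderiv ℝ (fderiv ℝ f) q (1, 0) (0, 1) := by
    unfold pdx pdy
    rw [fderiv_clm_apply hdf (differentiableAt_const _)]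
    simp
  have h2 : pdy (pdx f) q = fderiv ℝ (fderiv ℝ f) q (0, 1) (1, 0) := by
    unfold pdx pdy
    rw [fderiv_clm_apply hdf (differentiableAt_const _)]
    simp
  rw [h1, h2, hsym]

end Tools


noncomputable def Wf (h : ℝ × ℝ → ℝ) : ℝ × ℝ → ℝ := fun x => (pdx h x) ^ 2 + (pdy h x) ^ 2
noncomputable def iWf (h : ℝ × ℝ → ℝ) : ℝ × ℝ → ℝ := fun x => (Wf h x)⁻¹
noncomputable def vf (h : ℝ × ℝ → ℝ) : ℝ × ℝ → ℝ := fun x => (h x * pdx h x) * iWf h x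

section Tools2
variable {U : Set (ℝ × ℝ)} {f1 f2 f3 f4 : ℝ × ℝ → ℝ} {q : ℝ × ℝ}

theorem pdx_form2 (h1 : DifferentiableAt ℝ f1 q) (h2 : DifferentiableAt ℝ f2 q)
    (h3 : DifferentiableAt ℝ f3 q) (h4 : DifferentiableAt ℝ f4 q) :
    pdx (fun x => 2 * (f1 x * f2 x) + 2 * (f3 x * f4 x)) q
      = 2 * (f1 q * pdx f2 q + f2 q * pdx f1 q) + 2 * (f3 q * pdx f4 q + f4 q * pdx f3 q) := by
  have e := pdx_add (q := q) (f := fun x => 2 * (f1 x * f2 x)) (g := fun x => 2 * (f3 x * f4 x))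
    ((h1.mul h2).const_mul 2) ((h3.mul h4).const_mul 2)
  rw [pdx_cmul 2 (h1.fun_mul h2), pdx_cmul 2 (h3.fun_mul h4), pdx_mul h1 h2, pdx_mul h3 h4] at e
  exact e

theorem pdy_form2 (h1 : DifferentiableAt ℝ f1 q) (h2 : DifferentiableAt ℝ f2 q)
    (h3 : DifferentiableAt ℝ f3 q) (h4 : DifferentiableAt ℝ f4 q) :
    pdy (fun x => 2 * (f1 x * f2 x) + 2 * (f3 x * f4 x)) q
      = 2 * (f1 q * pdy f2 q + f2 q * pdy f1 q) + 2 * (f3 q * pdy f4 q + f4 q * pdy f3 q) := by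
  have e := pdy_add (q := q) (f := fun x => 2 * (f1 x * f2 x)) (g := fun x => 2 * (f3 x * f4 x))
    ((h1.mul h2).const_mul 2) ((h3.mul h4).const_mul 2)
  rw [pdy_cmul 2 (h1.fun_mul h2), pdy_cmul 2 (h3.fun_mul h4), pdy_mul h1 h2, pdy_mul h3 h4] at e
  exact e

end Tools2

set_option maxHeartbeats 2000000 in
/-- There are no timelike minimal modular surfaces in Lorentz-Minkowski 3-space:
no smooth positive `h` on a nonempty connected open `U ⊆ ℝ²` can satisfy the
modularity identity, the timelike condition `h_x² + h_y² > 1` and the zero mean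
curvature equation simultaneously. -/
theorem no_timelike_minimal_modular
    (U : Set (ℝ × ℝ)) (hU : IsOpen U) (hUconn : IsConnected U) (hUne : U.Nonempty) :
    ¬ ∃ h : ℝ × ℝ → ℝ, ContDiffOn ℝ (⊤ : ℕ∞) h U ∧
      (∀ p ∈ U, 0 < h p) ∧
      (∀ p ∈ U,
        h p * (pdx (pdx h) p + pdy (pdy h) p) = (pdx h p) ^ 2 + (pdy h p) ^ 2) ∧
      (∀ p ∈ U, 1 < (pdx h p) ^ 2 + (pdy h p) ^ 2) ∧
      (∀ p ∈ U,
        (1 - (pdy h p) ^ 2) * pdx (pdx h) p + 2 * pdx h p * pdy h p * pdy (pdx h) p +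
          (1 - (pdx h p) ^ 2) * pdy (pdy h) p = 0) := by
  rintro ⟨h, hsm, hpos, hmod, htime, hzmc⟩
  obtain ⟨p, hpU⟩ := hUne
  -- smoothness of derivatives and auxiliary functions
  have s1 : ContDiffOn ℝ (⊤ : ℕ∞) (pdx h) U := pdx_sm hU hsm
  have s2 : ContDiffOn ℝ (⊤ : ℕ∞) (pdy h) U := pdy_sm hU hsm
  have s11 : ContDiffOn ℝ (⊤ : ℕ∞) (pdx (pdx h)) U := pdx_sm hU s1
  have s12 : ContDiffOn ℝ (⊤ : ℕ∞) (pdx (pdy h)) U := pdx_sm hU s2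
  have s22 : ContDiffOn ℝ (⊤ : ℕ∞) (pdy (pdy h)) U := pdy_sm hU s2
  have s111 : ContDiffOn ℝ (⊤ : ℕ∞) (pdx (pdx (pdx h))) U := pdx_sm hU s11
  have s112 : ContDiffOn ℝ (⊤ : ℕ∞) (pdy (pdx (pdx h))) U := pdy_sm hU s11
  have s122 : ContDiffOn ℝ (⊤ : ℕ∞) (pdy (pdx (pdy h))) U := pdy_sm hU s12
  have s222 : ContDiffOn ℝ (⊤ : ℕ∞) (pdy (pdy (pdy h))) U := pdy_sm hU s22
  have sW : ContDiffOn ℝ (⊤ : ℕ∞) (Wf h) U := (s1.pow 2).add (s2.pow 2)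
  have hWpos : ∀ q ∈ U, (0:ℝ) < Wf h q := fun q hq => lt_trans one_pos (htime q hq)
  have hWne : ∀ q ∈ U, Wf h q ≠ 0 := fun q hq => ne_of_gt (hWpos q hq)
  have siW : ContDiffOn ℝ (⊤ : ℕ∞) (iWf h) U := sW.inv hWne
  have sv : ContDiffOn ℝ (⊤ : ℕ∞) (vf h) U := (hsm.mul s1).mul siW
  have svx : ContDiffOn ℝ (⊤ : ℕ∞) (pdx (vf h)) U := pdx_sm hU sv
  have svy : ContDiffOn ℝ (⊤ : ℕ∞) (pdy (vf h)) U := pdy_sm hU sv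
  have siWx : ContDiffOn ℝ (⊤ : ℕ∞) (pdx (iWf h)) U := pdx_sm hU siW
  have siWy : ContDiffOn ℝ (⊤ : ℕ∞) (pdy (iWf h)) U := pdy_sm hU siW
  have sWx : ContDiffOn ℝ (⊤ : ℕ∞) (pdx (Wf h)) U := pdx_sm hU sW
  -- Clairaut conversions
  have cl1 : ∀ q ∈ U, pdy (pdx h) q = pdx (pdy h) q := fun q hq => (pdxy_comm hU hsm hq).symm
  have cl2 : ∀ q ∈ U, pdx (pdx (pdy h)) q = pdy (pdx (pdx h)) q := by
    intro q hq
    have e1 : pdx (pdx (pdy h)) q = pdx (pdy (pdx h)) q :=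
      pdx_congrU hU (fun x hx => (cl1 x hx).symm) hq
    rw [e1, pdxy_comm hU s1 hq]
  have cl3 : ∀ q ∈ U, pdx (pdy (pdy h)) q = pdy (pdx (pdy h)) q := fun q hq => pdxy_comm hU s2 hq
  -- ZMC with canonical mixed derivative
  have hzmc2 : ∀ q ∈ U, (1 - (pdy h q) ^ 2) * pdx (pdx h) q
      + 2 * pdx h q * pdy h q * pdx (pdy h) q + (1 - (pdx h q) ^ 2) * pdy (pdy h) q = 0 := by
    intro q hq
    have e := hzmc q hq
    rwa [cl1 q hq] at e
  -- first derivatives of W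
  have dWx : ∀ q ∈ U, pdx (Wf h) q
      = 2 * (pdx h q * pdx (pdx h) q) + 2 * (pdy h q * pdx (pdy h) q) := by
    intro q hq
    have e := pdx_add (q := q) (f := fun x => (pdx h x) ^ 2) (g := fun x => (pdy h x) ^ 2)
      ((dAt hU s1 hq).pow 2) ((dAt hU s2 hq).pow 2)
    rw [pdx_sq (dAt hU s1 hq), pdx_sq (dAt hU s2 hq)] at e
    have : pdx (Wf h) q = pdx (fun x => (pdx h x) ^ 2 + (pdy h x) ^ 2) q := rfl
    rw [this, e]; ring
  have dWy : ∀ q ∈ U, pdy (Wf h) q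
      = 2 * (pdx h q * pdx (pdy h) q) + 2 * (pdy h q * pdy (pdy h) q) := by
    intro q hq
    have e := pdy_add (q := q) (f := fun x => (pdx h x) ^ 2) (g := fun x => (pdy h x) ^ 2)
      ((dAt hU s1 hq).pow 2) ((dAt hU s2 hq).pow 2)
    rw [pdy_sq (dAt hU s1 hq), pdy_sq (dAt hU s2 hq), cl1 q hq] at e
    have : pdy (Wf h) q = pdy (fun x => (pdx h x) ^ 2 + (pdy h x) ^ 2) q := rfl
    rw [this, e]; ring
  -- modular identity differentiated
  have hR1x : ∀ q ∈ U, pdx h q * (pdx (pdx h) q + pdy (pdy h) q)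
      + h q * (pdx (pdx (pdx h)) q + pdy (pdx (pdy h)) q)
      = 2 * (pdx h q * pdx (pdx h) q) + 2 * (pdy h q * pdx (pdy h) q) := by
    intro q hq
    have e : pdx (fun x => h x * (pdx (pdx h) x + pdy (pdy h) x)) q = pdx (Wf h) q :=
      pdx_congrU hU (fun x hx => hmod x hx) hq
    rw [pdx_mul (dAt hU hsm hq) ((dAt hU s11 hq).fun_add (dAt hU s22 hq)),
      pdx_add (dAt hU s11 hq) (dAt hU s22 hq), dWx q hq, cl3 q hq] at e
    linear_combination e
  have hR1y : ∀ q ∈ U, pdy h q * (pdx (pdx h) q + pdy (pdy h) q)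
      + h q * (pdy (pdx (pdx h)) q + pdy (pdy (pdy h)) q)
      = 2 * (pdx h q * pdx (pdy h) q) + 2 * (pdy h q * pdy (pdy h) q) := by
    intro q hq
    have e : pdy (fun x => h x * (pdx (pdx h) x + pdy (pdy h) x)) q = pdy (Wf h) q :=
      pdy_congrU hU (fun x hx => hmod x hx) hq
    rw [pdy_mul (dAt hU hsm hq) ((dAt hU s11 hq).fun_add (dAt hU s22 hq)),
      pdy_add (dAt hU s11 hq) (dAt hU s22 hq), dWy q hq] at e
    linear_combination e
  -- inverse-of-W relations
  have hs0 : ∀ q ∈ U, iWf h q * Wf h q = 1 := fun q hq => inv_mul_cancel₀ (hWne q hq)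
  have hs1 : ∀ q ∈ U, pdx (iWf h) q * Wf h q
      + iWf h q * (2 * (pdx h q * pdx (pdx h) q) + 2 * (pdy h q * pdx (pdy h) q)) = 0 := by
    intro q hq
    have e : pdx (fun x => iWf h x * Wf h x) q = pdx (fun _ => (1:ℝ)) q :=
      pdx_congrU hU (fun x hx => hs0 x hx) hq
    rw [pdx_mul (dAt hU siW hq) (dAt hU sW hq), pdx_const, dWx q hq] at e
    linear_combination e
  have hs1y : ∀ q ∈ U, pdy (iWf h) q * Wf h q
      + iWf h q * (2 * (pdx h q * pdx (pdy h) q) + 2 * (pdy h q * pdy (pdy h) q)) = 0 := by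
    intro q hq
    have e : pdy (fun x => iWf h x * Wf h x) q = pdy (fun _ => (1:ℝ)) q :=
      pdy_congrU hU (fun x hx => hs0 x hx) hq
    rw [pdy_mul (dAt hU siW hq) (dAt hU sW hq), pdy_const, dWy q hq] at e
    linear_combination e
  -- v = g/W relations
  have hr5 : ∀ q ∈ U, vf h q * Wf h q = h q * pdx h q := by
    intro q hq
    show ((h q * pdx h q) * iWf h q) * Wf h q = h q * pdx h q
    linear_combination (h q * pdx h q) * hs0 q hq
  have hr3 : ∀ q ∈ U, pdx (vf h) q * Wf h q
      + vf h q * (2 * (pdx h q * pdx (pdx h) q) + 2 * (pdy h q * pdx (pdy h) q))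
      = pdx h q * pdx h q + h q * pdx (pdx h) q := by
    intro q hq
    have e : pdx (fun x => vf h x * Wf h x) q = pdx (fun x => h x * pdx h x) q :=
      pdx_congrU hU (fun x hx => hr5 x hx) hq
    rw [pdx_mul (dAt hU sv hq) (dAt hU sW hq), pdx_mul (dAt hU hsm hq) (dAt hU s1 hq),
      dWx q hq] at e
    linear_combination e
  have hr4 : ∀ q ∈ U, pdy (vf h) q * Wf h q
      + vf h q * (2 * (pdx h q * pdx (pdy h) q) + 2 * (pdy h q * pdy (pdy h) q))
      = pdx h q * pdy h q + h q * pdx (pdy h) q := by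
    intro q hq
    have e : pdy (fun x => vf h x * Wf h x) q = pdy (fun x => h x * pdx h x) q :=
      pdy_congrU hU (fun x hx => hr5 x hx) hq
    rw [pdy_mul (dAt hU sv hq) (dAt hU sW hq), pdy_mul (dAt hU hsm hq) (dAt hU s1 hq),
      dWy q hq, cl1 q hq] at e
    linear_combination e
  -- second-order v relations
  have hr1 : ∀ q ∈ U, pdx (pdx (vf h)) q * Wf h q
      + pdx (vf h) q * (2 * (pdx h q * pdx (pdx h) q) + 2 * (pdy h q * pdx (pdy h) q))
      + (pdx (vf h) q * (2 * (pdx h q * pdx (pdx h) q) + 2 * (pdy h q * pdx (pdy h) q))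
        + vf h q * (2 * (pdx h q * pdx (pdx (pdx h)) q + pdx (pdx h) q * pdx (pdx h) q)
          + 2 * (pdy h q * pdy (pdx (pdx h)) q + pdx (pdy h) q * pdx (pdy h) q)))
      = (pdx h q * pdx (pdx h) q + pdx h q * pdx (pdx h) q)
        + (h q * pdx (pdx (pdx h)) q + pdx (pdx h) q * pdx h q) := by
    intro q hq
    have e : pdx (fun x => pdx (vf h) x * Wf h x
        + vf h x * (2 * (pdx h x * pdx (pdx h) x) + 2 * (pdy h x * pdx (pdy h) x))) q
        = pdx (fun x => pdx h x * pdx h x + h x * pdx (pdx h) x) q :=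
      pdx_congrU hU (fun x hx => hr3 x hx) hq
    have d1 : DifferentiableAt ℝ (fun x => pdx (vf h) x * Wf h x) q :=
      (dAt hU svx hq).mul (dAt hU sW hq)
    have d2 : DifferentiableAt ℝ
        (fun x => 2 * (pdx h x * pdx (pdx h) x) + 2 * (pdy h x * pdx (pdy h) x)) q :=
      (((dAt hU s1 hq).mul (dAt hU s11 hq)).const_mul 2).add
        (((dAt hU s2 hq).mul (dAt hU s12 hq)).const_mul 2)
    rw [pdx_add d1 ((dAt hU sv hq).fun_mul d2),
      pdx_mul (dAt hU svx hq) (dAt hU sW hq),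
      pdx_mul (dAt hU sv hq) d2,
      pdx_form2 (dAt hU s1 hq) (dAt hU s11 hq) (dAt hU s2 hq) (dAt hU s12 hq),
      pdx_add ((dAt hU s1 hq).fun_mul (dAt hU s1 hq)) ((dAt hU hsm hq).fun_mul (dAt hU s11 hq)),
      pdx_mul (dAt hU s1 hq) (dAt hU s1 hq),
      pdx_mul (dAt hU hsm hq) (dAt hU s11 hq),
      dWx q hq, cl2 q hq] at e
    linear_combination e
  have hr2 : ∀ q ∈ U, pdy (pdy (vf h)) q * Wf h q
      + pdy (vf h) q * (2 * (pdx h q * pdx (pdy h) q) + 2 * (pdy h q * pdy (pdy h) q))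
      + (pdy (vf h) q * (2 * (pdx h q * pdx (pdy h) q) + 2 * (pdy h q * pdy (pdy h) q))
        + vf h q * (2 * (pdx h q * pdy (pdx (pdy h)) q + pdx (pdy h) q * pdx (pdy h) q)
          + 2 * (pdy h q * pdy (pdy (pdy h)) q + pdy (pdy h) q * pdy (pdy h) q)))
      = (pdx h q * pdy (pdy h) q + pdy h q * pdx (pdy h) q)
        + (h q * pdy (pdx (pdy h)) q + pdx (pdy h) q * pdy h q) := by
    intro q hq
    have e : pdy (fun x => pdy (vf h) x * Wf h x
        + vf h x * (2 * (pdx h x * pdx (pdy h) x) + 2 * (pdy h x * pdy (pdy h) x))) q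
        = pdy (fun x => pdx h x * pdy h x + h x * pdx (pdy h) x) q :=
      pdy_congrU hU (fun x hx => hr4 x hx) hq
    have d1 : DifferentiableAt ℝ (fun x => pdy (vf h) x * Wf h x) q :=
      (dAt hU svy hq).mul (dAt hU sW hq)
    have d2 : DifferentiableAt ℝ
        (fun x => 2 * (pdx h x * pdx (pdy h) x) + 2 * (pdy h x * pdy (pdy h) x)) q :=
      (((dAt hU s1 hq).mul (dAt hU s12 hq)).const_mul 2).add
        (((dAt hU s2 hq).mul (dAt hU s22 hq)).const_mul 2)
    rw [pdy_add d1 ((dAt hU sv hq).fun_mul d2),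
      pdy_mul (dAt hU svy hq) (dAt hU sW hq),
      pdy_mul (dAt hU sv hq) d2,
      pdy_form2 (dAt hU s1 hq) (dAt hU s12 hq) (dAt hU s2 hq) (dAt hU s22 hq),
      pdy_add ((dAt hU s1 hq).fun_mul (dAt hU s2 hq)) ((dAt hU hsm hq).fun_mul (dAt hU s12 hq)),
      pdy_mul (dAt hU s1 hq) (dAt hU s2 hq),
      pdy_mul (dAt hU hsm hq) (dAt hU s12 hq),
      dWy q hq, cl1 q hq] at e
    linear_combination e
  -- claim 2 : v is harmonic on U
  have hlap : ∀ q ∈ U, pdx (pdx (vf h)) q + pdy (pdy (vf h)) q = 0 := by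
    intro q hq
    have hWq : Wf h q = (pdx h q) ^ 2 + (pdy h q) ^ 2 := rfl
    have hr1 := hr1 q hq; have hr2 := hr2 q hq; have hr3 := hr3 q hq
    have hr4 := hr4 q hq; have hr5 := hr5 q hq
    have hR1x := hR1x q hq; have hR1y := hR1y q hq; have hmodq := hmod q hq
    rw [hWq] at hr1 hr2 hr3 hr4 hr5
    have key : (pdx (pdx (vf h)) q + pdy (pdy (vf h)) q)
        * ((h q) ^ 4 * ((pdx h q) ^ 2 + (pdy h q) ^ 2) ^ 5) = 0 := by
      linear_combination ((h q)^4*(pdy h q)^8 + 4*(h q)^4*(pdx h q)^2*(pdy h q)^6 + 6*(h q)^4*(pdx h q)^4*(pdy h q)^4 + 4*(h q)^4*(pdx h q)^6*(pdy h q)^2 + (h q)^4*(pdx h q)^8) * hr1 + ((h q)^4*(pdy h q)^8 + 4*(h q)^4*(pdx h q)^2*(pdy h q)^6 + 6*(h q)^4*(pdx h q)^4*(pdy h q)^4 + 4*(h q)^4*(pdx h q)^6*(pdy h q)^2 + (h q)^4*(pdx h q)^8) * hr2 + ((-4)*(h q)^4*(pdy h q)^7*(pdx (pdy h) q) + (-4)*(h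 q)^4*(pdx h q)*(pdy h q)^6*(pdx (pdx h) q) + (-12)*(h q)^4*(pdx h q)^2*(pdy h q)^5*(pdx (pdy h) q) + (-12)*(h q)^4*(pdx h q)^3*(pdy h q)^4*(pdx (pdx h) q) + (-12)*(h q)^4*(pdx h q)^4*(pdy h q)^3*(pdx (pdy h) q) + (-12)*(h q)^4*(pdx h q)^5*(pdy h q)^2*(pdx (pdx h) q) + (-4)*(h q)^4*(pdx h q)^6*(pdy h q)*(pdx (pdy h) q) + (-4)*(h q)^4*(pdx h q)^7*(pdx (pdx h) q)) * hr3 + ((-4)*(h q)^4*(pdy h q)^7*(pdy (pdy h) q) + (-4)*(h q)^4*(pdx h q)*(pdy h q)^6*(pdx (pdy h) q) + (-12)*(h q)^4*(pdx h q)^2*(pdy h q)^5*(pdy (pdy h) q) + (-12)*(h q)^4*(pdx h q)^3*(pdy h q)^4*(pdx (pdy h) q) + (-12)*(h q)^4*(pdx h q)^4*(pdy h q)^3*(pdy (pdy h) q) + (-12)*(h q)^4*(pdx h q)^5*(pdy h q)^2*(pdx (pdy h) q) + (-4)*(h q)^4*(pdx h q)^6*(pdy h q)*(pdy (pdy h)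 q) + (-4)*(h q)^4*(pdx h q)^7*(pdx (pdy h) q)) * hr4 + (6*(h q)^4*(pdy h q)^6*(pdy (pdy h) q)^2 + 4*(h q)^4*(pdy h q)^6*(pdx (pdy h) q)^2 + (-2)*(h q)^4*(pdy h q)^6*(pdx (pdx h) q)^2 + (-2)*(h q)^4*(pdy h q)^7*(pdy (pdy (pdy h)) q) + (-2)*(h q)^4*(pdy h q)^7*(pdy (pdx (pdx h)) q) + 16*(h q)^4*(pdx h q)*(pdy h q)^5*(pdx (pdy h) q)*(pdy (pdy h) q) + 16*(h q)^4*(pdx h q)*(pdy h q)^5*(pdx (pdx h) q)*(pdx (pdy h) q) + (-2)*(h q)^4*(pdx h q)*(pdy h q)^6*(pdy (pdx (pdy h)) q) + (-2)*(h q)^4*(pdx h q)*(pdy h q)^6*(pdx (pdx (pdx h)) q) + 10*(h q)^4*(pdx h q)^2*(pdy h q)^4*(pdy (pdy h) q)^2 + 12*(h q)^4*(pdx h q)^2*(pdy h q)^4*(pdx (pdy h) q)^2 + 2*(h q)^4*(pdx h q)^2*(pdy h q)^4*(pdx (pdx h) q)^2 + (-6)*(h q)^4*(pdx h q)^2*(pdy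 h q)^5*(pdy (pdy (pdy h)) q) + (-6)*(h q)^4*(pdx h q)^2*(pdy h q)^5*(pdy (pdx (pdx h)) q) + 32*(h q)^4*(pdx h q)^3*(pdy h q)^3*(pdx (pdy h) q)*(pdy (pdy h) q) + 32*(h q)^4*(pdx h q)^3*(pdy h q)^3*(pdx (pdx h) q)*(pdx (pdy h) q) + (-6)*(h q)^4*(pdx h q)^3*(pdy h q)^4*(pdy (pdx (pdy h)) q) + (-6)*(h q)^4*(pdx h q)^3*(pdy h q)^4*(pdx (pdx (pdx h)) q) + 2*(h q)^4*(pdx h q)^4*(pdy h q)^2*(pdy (pdy h) q)^2 + 12*(h q)^4*(pdx h q)^4*(pdy h q)^2*(pdx (pdy h) q)^2 + 10*(h q)^4*(pdx h q)^4*(pdy h q)^2*(pdx (pdx h) q)^2 + (-6)*(h q)^4*(pdx h q)^4*(pdy h q)^3*(pdy (pdy (pdy h)) q) + (-6)*(h q)^4*(pdx h q)^4*(pdy h q)^3*(pdy (pdx (pdx h)) q) + 16*(h q)^4*(pdx h q)^5*(pdy h q)*(pdx (pdy h) q)*(pdy (pdy h) q) + 16*(h q)^4*(pdx h q)^5*(pdy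 h q)*(pdx (pdx h) q)*(pdx (pdy h) q) + (-6)*(h q)^4*(pdx h q)^5*(pdy h q)^2*(pdy (pdx (pdy h)) q) + (-6)*(h q)^4*(pdx h q)^5*(pdy h q)^2*(pdx (pdx (pdx h)) q) + (-2)*(h q)^4*(pdx h q)^6*(pdy (pdy h) q)^2 + 4*(h q)^4*(pdx h q)^6*(pdx (pdy h) q)^2 + 6*(h q)^4*(pdx h q)^6*(pdx (pdx h) q)^2 + (-2)*(h q)^4*(pdx h q)^6*(pdy h q)*(pdy (pdy (pdy h)) q) + (-2)*(h q)^4*(pdx h q)^6*(pdy h q)*(pdy (pdx (pdx h)) q) + (-2)*(h q)^4*(pdx h q)^7*(pdy (pdx (pdy h)) q) + (-2)*(h q)^4*(pdx h q)^7*(pdx (pdx (pdx h)) q)) * hr5 + ((h q)^4*(pdy h q)^8 + 2*(h q)^4*(pdx h q)^2*(pdy h q)^6 + (-2)*(h q)^4*(pdx h q)^6*(pdy h q)^2 + (-1)*(h q)^4*(pdx h q)^8) * hR1x + ((-2)*(h q)^4*(pdx h q)*(pdy h q)^7 + (-6)*(h q)^4*(pdx h q)^3*(pdy h q)^5 + (-6)*(h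 q)^4*(pdx h q)^5*(pdy h q)^3 + (-2)*(h q)^4*(pdx h q)^7*(pdy h q)) * hR1y + ((-4)*(h q)^4*(pdy h q)^7*(pdx (pdy h) q) + 6*(h q)^4*(pdx h q)*(pdy h q)^6*(pdy (pdy h) q) + (-6)*(h q)^4*(pdx h q)*(pdy h q)^6*(pdx (pdx h) q) + 4*(h q)^4*(pdx h q)^2*(pdy h q)^5*(pdx (pdy h) q) + 10*(h q)^4*(pdx h q)^3*(pdy h q)^4*(pdy (pdy h) q) + (-10)*(h q)^4*(pdx h q)^3*(pdy h q)^4*(pdx (pdx h) q) + 20*(h q)^4*(pdx h q)^4*(pdy h q)^3*(pdx (pdy h) q) + 2*(h q)^4*(pdx h q)^5*(pdy h q)^2*(pdy (pdy h) q) + (-2)*(h q)^4*(pdx h q)^5*(pdy h q)^2*(pdx (pdx h) q) + 12*(h q)^4*(pdx h q)^6*(pdy h q)*(pdx (pdy h) q) + (-2)*(h q)^4*(pdx h q)^7*(pdy (pdy h) q) + 2*(h q)^4*(pdx h q)^7*(pdx (pdx h) q)) * hmodq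
    have hne : (h q) ^ 4 * ((pdx h q) ^ 2 + (pdy h q) ^ 2) ^ 5 ≠ 0 := by
      have h0 := hpos q hq
      have hW0 : (0:ℝ) < (pdx h q) ^ 2 + (pdy h q) ^ 2 := hWpos q hq
      positivity
    exact (mul_eq_zero.mp key).resolve_right hne
  -- claim a : pdx v = 1/W on U
  have hva : ∀ q ∈ U, pdx (vf h) q = iWf h q := by
    intro q hq
    have hWq : Wf h q = (pdx h q) ^ 2 + (pdy h q) ^ 2 := rfl
    have hr3 := hr3 q hq; have hr5 := hr5 q hq
    have hmodq := hmod q hq; have hzmc2q := hzmc2 q hq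
    rw [hWq] at hr3 hr5
    have key : (pdx (vf h) q * ((pdx h q) ^ 2 + (pdy h q) ^ 2) - 1)
        * (((pdx h q) ^ 2 + (pdy h q) ^ 2) ^ 2) = 0 := by
      linear_combination ((pdy h q)^4 + 2*(pdx h q)^2*(pdy h q)^2 + (pdx h q)^4) * hr3 + ((-2)*(pdy h q)^3*(pdx (pdy h) q) + (-2)*(pdx h q)*(pdy h q)^2*(pdx (pdx h) q) + (-2)*(pdx h q)^2*(pdy h q)*(pdx (pdy h) q) + (-2)*(pdx h q)^3*(pdx (pdx h) q)) * hr5 + ((pdy h q)^2 + (pdx h q)^2 + (-1)*(pdx h q)^2*(pdy h q)^2 + (-1)*(pdx h q)^4) * hmodq - ((h q)*(pdy h q)^2 + (h q)*(pdx h q)^2) * hzmc2q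
    have hWne' : ((pdx h q) ^ 2 + (pdy h q) ^ 2) ≠ 0 := hWne q hq
    have h2 : pdx (vf h) q * ((pdx h q) ^ 2 + (pdy h q) ^ 2) = 1 := by
      rcases mul_eq_zero.mp key with h' | h'
      · linarith
      · exact absurd h' (pow_ne_zero 2 hWne')
    have h3 : iWf h q * ((pdx h q) ^ 2 + (pdy h q) ^ 2) = 1 := hs0 q hq
    exact mul_right_cancel₀ hWne' (h2.trans h3.symm)
  -- transfer second derivatives
  have hvx2 : ∀ q ∈ U, pdx (pdx (vf h)) q = pdx (iWf h) q :=
    fun q hq => pdx_congrU hU (fun x hx => hva x hx) hq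
  have hvy2 : ∀ q ∈ U, pdy (pdx (vf h)) q = pdy (iWf h) q :=
    fun q hq => pdy_congrU hU (fun x hx => hva x hx) hq
  -- Laplacian of pdx v vanishes at p
  have hE1 : pdx (fun x => pdx (pdx (vf h)) x + pdy (pdy (vf h)) x) p = 0 := by
    have e : pdx (fun x => pdx (pdx (vf h)) x + pdy (pdy (vf h)) x) p = pdx (fun _ => (0:ℝ)) p :=
      pdx_congrU hU (fun x hx => hlap x hx) hpU
    rw [e, pdx_const]
  have hE2 : pdx (pdx (pdx (vf h))) p + pdx (pdy (pdy (vf h))) p = 0 := by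
    rw [← pdx_add (dAt hU (pdx_sm hU svx) hpU) (dAt hU (pdy_sm hU svy) hpU)]
    exact hE1
  have hE3 : pdx (pdy (pdy (vf h))) p = pdy (pdy (pdx (vf h))) p := by
    rw [pdxy_comm hU svy hpU]
    exact pdy_congrU hU (fun x hx => pdxy_comm hU sv hx) hpU
  have hEv : pdx (pdx (pdx (vf h))) p + pdy (pdy (pdx (vf h))) p = 0 := by
    rw [← hE3]; exact hE2
  have hEiW : pdx (pdx (iWf h)) p + pdy (pdy (iWf h)) p = 0 := by
    have t1 : pdx (pdx (pdx (vf h))) p = pdx (pdx (iWf h)) p :=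
      pdx_congrU hU (fun x hx => hvx2 x hx) hpU
    have t2 : pdy (pdy (pdx (vf h))) p = pdy (pdy (iWf h)) p :=
      pdy_congrU hU (fun x hx => hvy2 x hx) hpU
    rw [← t1, ← t2]; exact hEv
  -- second derivatives of 1/W at p
  have hs2 : pdx (pdx (iWf h)) p * Wf h p
      + pdx (iWf h) p * (2 * (pdx h p * pdx (pdx h) p) + 2 * (pdy h p * pdx (pdy h) p))
      + (pdx (iWf h) p * (2 * (pdx h p * pdx (pdx h) p) + 2 * (pdy h p * pdx (pdy h) p))
        + iWf h p * (2 * (pdx h p * pdx (pdx (pdx h)) p + pdx (pdx h) p * pdx (pdx h) p)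
          + 2 * (pdy h p * pdy (pdx (pdx h)) p + pdx (pdy h) p * pdx (pdy h) p))) = 0 := by
    have e : pdx (fun x => pdx (iWf h) x * Wf h x
        + iWf h x * (2 * (pdx h x * pdx (pdx h) x) + 2 * (pdy h x * pdx (pdy h) x))) p
        = pdx (fun _ => (0:ℝ)) p :=
      pdx_congrU hU (fun x hx => hs1 x hx) hpU
    have d1 : DifferentiableAt ℝ (fun x => pdx (iWf h) x * Wf h x) p :=
      (dAt hU siWx hpU).mul (dAt hU sW hpU)
    have d2 : DifferentiableAt ℝ
        (fun x => 2 * (pdx h x * pdx (pdx h) x) + 2 * (pdy h x * pdx (pdy h) x)) p :=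
      (((dAt hU s1 hpU).mul (dAt hU s11 hpU)).const_mul 2).add
        (((dAt hU s2 hpU).mul (dAt hU s12 hpU)).const_mul 2)
    rw [pdx_add d1 ((dAt hU siW hpU).fun_mul d2),
      pdx_mul (dAt hU siWx hpU) (dAt hU sW hpU),
      pdx_mul (dAt hU siW hpU) d2,
      pdx_form2 (dAt hU s1 hpU) (dAt hU s11 hpU) (dAt hU s2 hpU) (dAt hU s12 hpU),
      pdx_const, dWx p hpU, cl2 p hpU] at e
    linear_combination e
  have hs2y : pdy (pdy (iWf h)) p * Wf h p
      + pdy (iWf h) p * (2 * (pdx h p * pdx (pdy h) p) + 2 * (pdy h p * pdy (pdy h) p))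
      + (pdy (iWf h) p * (2 * (pdx h p * pdx (pdy h) p) + 2 * (pdy h p * pdy (pdy h) p))
        + iWf h p * (2 * (pdx h p * pdy (pdx (pdy h)) p + pdx (pdy h) p * pdx (pdy h) p)
          + 2 * (pdy h p * pdy (pdy (pdy h)) p + pdy (pdy h) p * pdy (pdy h) p))) = 0 := by
    have e : pdy (fun x => pdy (iWf h) x * Wf h x
        + iWf h x * (2 * (pdx h x * pdx (pdy h) x) + 2 * (pdy h x * pdy (pdy h) x))) p
        = pdy (fun _ => (0:ℝ)) p :=
      pdy_congrU hU (fun x hx => hs1y x hx) hpU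
    have d1 : DifferentiableAt ℝ (fun x => pdy (iWf h) x * Wf h x) p :=
      (dAt hU siWy hpU).mul (dAt hU sW hpU)
    have d2 : DifferentiableAt ℝ
        (fun x => 2 * (pdx h x * pdx (pdy h) x) + 2 * (pdy h x * pdy (pdy h) x)) p :=
      (((dAt hU s1 hpU).mul (dAt hU s12 hpU)).const_mul 2).add
        (((dAt hU s2 hpU).mul (dAt hU s22 hpU)).const_mul 2)
    rw [pdy_add d1 ((dAt hU siW hpU).fun_mul d2),
      pdy_mul (dAt hU siWy hpU) (dAt hU sW hpU),
      pdy_mul (dAt hU siW hpU) d2,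
      pdy_form2 (dAt hU s1 hpU) (dAt hU s12 hpU) (dAt hU s2 hpU) (dAt hU s22 hpU),
      pdy_const, dWy p hpU, cl1 p hpU] at e
    linear_combination e
  -- claim 3 at p (jet identity, multiplied by h^4)
  have hR1xp := hR1x p hpU
  have hR1yp := hR1y p hpU
  have hmodp := hmod p hpU
  have hzmc2p := hzmc2 p hpU
  have hTc3 : (h p) ^ 4 * (((pdx h p) ^ 2 + (pdy h p) ^ 2)
      * ((2 * (pdx h p * pdx (pdx (pdx h)) p + pdx (pdx h) p * pdx (pdx h) p)
        + 2 * (pdy h p * pdy (pdx (pdx h)) p + pdx (pdy h) p * pdx (pdy h) p))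
        + (2 * (pdx h p * pdy (pdx (pdy h)) p + pdx (pdy h) p * pdx (pdy h) p)
        + 2 * (pdy h p * pdy (pdy (pdy h)) p + pdy (pdy h) p * pdy (pdy h) p))))
      = (h p) ^ 4 * ((2 * (pdx h p * pdx (pdx h) p) + 2 * (pdy h p * pdx (pdy h) p)) ^ 2
        + (2 * (pdx h p * pdx (pdy h) p) + 2 * (pdy h p * pdy (pdy h) p)) ^ 2) := by
    linear_combination (2*(h p)^3*(pdx h p)*(pdy h p)^2 + 2*(h p)^3*(pdx h p)^3) * hR1xp + (2*(h p)^3*(pdy h p)^3 + 2*(h p)^3*(pdx h p)^2*(pdy h p)) * hR1yp + ((-2)*(h p)^3*(pdy h p)^2*(pdy (pdy h) p) + 2*(h p)^3*(pdy h p)^2*(pdx (pdx h) p) + (-8)*(h p)^3*(pdx h p)*(pdy h p)*(pdx (pdy h) p) + 2*(h p)^3*(pdx h p)^2*(pdy (pdy h) p) + (-2)*(h p)^3*(pdx h p)^2*(pdx (pdx h) p)) * hmodp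
  -- assembly: the gradient of W vanishes at p
  have hs1p := hs1 p hpU
  have hs1yp := hs1y p hpU
  have hs0p := hs0 p hpU
  have hWp : Wf h p = (pdx h p) ^ 2 + (pdy h p) ^ 2 := rfl
  rw [hWp] at hs2 hs2y hs1p hs1yp hs0p
  have hQ : ((2 * (pdx h p * pdx (pdx h) p) + 2 * (pdy h p * pdx (pdy h) p)) ^ 2
      + (2 * (pdx h p * pdx (pdy h) p) + 2 * (pdy h p * pdy (pdy h) p)) ^ 2)
      * (((pdx h p) ^ 2 + (pdy h p) ^ 2) ^ 2 * (h p) ^ 4) = 0 := by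
    linear_combination ((h p)^4*(pdy h p)^10 + 5*(h p)^4*(pdx h p)^2*(pdy h p)^8 + 10*(h p)^4*(pdx h p)^4*(pdy h p)^6 + 10*(h p)^4*(pdx h p)^6*(pdy h p)^4 + 5*(h p)^4*(pdx h p)^8*(pdy h p)^2 + (h p)^4*(pdx h p)^10) * hEiW + (-((h p)^4*(pdy h p)^8 + 4*(h p)^4*(pdx h p)^2*(pdy h p)^6 + 6*(h p)^4*(pdx h p)^4*(pdy h p)^4 + 4*(h p)^4*(pdx h p)^6*(pdy h p)^2 + (h p)^4*(pdx h p)^8)) * hs2 + (-((h p)^4*(pdy h p)^8 + 4*(h p)^4*(pdx h p)^2*(pdy h p)^6 + 6*(h p)^4*(pdx h p)^4*(pdy h p)^4 + 4*(h p)^4*(pdx h p)^6*(pdy h p)^2 + (h p)^4*(pdx h p)^8)) * hs2y + (-((-4)*(h p)^4*(pdy h p)^7*(pdx (pdy h) p) + (-4)*(h p)^4*(pdx h p)*(pdy h p)^6*(pdx (pdx h) p) + (-12)*(h p)^4*(pdx h p)^2*(pdy h p)^5*(pdx (pdy h) p) + (-12)*(h p)^4*(pdx h p)^3*(pdy h p)^4*(pdx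 (pdx h) p) + (-12)*(h p)^4*(pdx h p)^4*(pdy h p)^3*(pdx (pdy h) p) + (-12)*(h p)^4*(pdx h p)^5*(pdy h p)^2*(pdx (pdx h) p) + (-4)*(h p)^4*(pdx h p)^6*(pdy h p)*(pdx (pdy h) p) + (-4)*(h p)^4*(pdx h p)^7*(pdx (pdx h) p))) * hs1p + (-((-4)*(h p)^4*(pdy h p)^7*(pdy (pdy h) p) + (-4)*(h p)^4*(pdx h p)*(pdy h p)^6*(pdx (pdy h) p) + (-12)*(h p)^4*(pdx h p)^2*(pdy h p)^5*(pdy (pdy h) p) + (-12)*(h p)^4*(pdx h p)^3*(pdy h p)^4*(pdx (pdy h) p) + (-12)*(h p)^4*(pdx h p)^4*(pdy h p)^3*(pdy (pdy h) p) + (-12)*(h p)^4*(pdx h p)^5*(pdy h p)^2*(pdx (pdy h) p) + (-4)*(h p)^4*(pdx h p)^6*(pdy h p)*(pdy (pdy h) p) + (-4)*(h p)^4*(pdx h p)^7*(pdx (pdy h) p))) * hs1yp + (-(6*(h p)^4*(pdy h p)^6*(pdy (pdy h) p)^2 + 4*(h p)^4*(pdy h p)^6*(pdx (pdy h) p)^2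 + (-2)*(h p)^4*(pdy h p)^6*(pdx (pdx h) p)^2 + (-2)*(h p)^4*(pdy h p)^7*(pdy (pdy (pdy h)) p) + (-2)*(h p)^4*(pdy h p)^7*(pdy (pdx (pdx h)) p) + 16*(h p)^4*(pdx h p)*(pdy h p)^5*(pdx (pdy h) p)*(pdy (pdy h) p) + 16*(h p)^4*(pdx h p)*(pdy h p)^5*(pdx (pdx h) p)*(pdx (pdy h) p) + (-2)*(h p)^4*(pdx h p)*(pdy h p)^6*(pdy (pdx (pdy h)) p) + (-2)*(h p)^4*(pdx h p)*(pdy h p)^6*(pdx (pdx (pdx h)) p) + 10*(h p)^4*(pdx h p)^2*(pdy h p)^4*(pdy (pdy h) p)^2 + 12*(h p)^4*(pdx h p)^2*(pdy h p)^4*(pdx (pdy h) p)^2 + 2*(h p)^4*(pdx h p)^2*(pdy h p)^4*(pdx (pdx h) p)^2 + (-6)*(h p)^4*(pdx h p)^2*(pdy h p)^5*(pdy (pdy (pdy h)) p) + (-6)*(h p)^4*(pdx h p)^2*(pdy h p)^5*(pdy (pdx (pdx h)) p) + 32*(h p)^4*(pdx h p)^3*(pdy h p)^3*(pdx (pdy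 h) p)*(pdy (pdy h) p) + 32*(h p)^4*(pdx h p)^3*(pdy h p)^3*(pdx (pdx h) p)*(pdx (pdy h) p) + (-6)*(h p)^4*(pdx h p)^3*(pdy h p)^4*(pdy (pdx (pdy h)) p) + (-6)*(h p)^4*(pdx h p)^3*(pdy h p)^4*(pdx (pdx (pdx h)) p) + 2*(h p)^4*(pdx h p)^4*(pdy h p)^2*(pdy (pdy h) p)^2 + 12*(h p)^4*(pdx h p)^4*(pdy h p)^2*(pdx (pdy h) p)^2 + 10*(h p)^4*(pdx h p)^4*(pdy h p)^2*(pdx (pdx h) p)^2 + (-6)*(h p)^4*(pdx h p)^4*(pdy h p)^3*(pdy (pdy (pdy h)) p) + (-6)*(h p)^4*(pdx h p)^4*(pdy h p)^3*(pdy (pdx (pdx h)) p) + 16*(h p)^4*(pdx h p)^5*(pdy h p)*(pdx (pdy h) p)*(pdy (pdy h) p) + 16*(h p)^4*(pdx h p)^5*(pdy h p)*(pdx (pdx h) p)*(pdx (pdy h) p) + (-6)*(h p)^4*(pdx h p)^5*(pdy h p)^2*(pdy (pdx (pdy h)) p) + (-6)*(h p)^4*(pdx h p)^5*(pdy h p)^2*(pdx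 (pdx (pdx h)) p) + (-2)*(h p)^4*(pdx h p)^6*(pdy (pdy h) p)^2 + 4*(h p)^4*(pdx h p)^6*(pdx (pdy h) p)^2 + 6*(h p)^4*(pdx h p)^6*(pdx (pdx h) p)^2 + (-2)*(h p)^4*(pdx h p)^6*(pdy h p)*(pdy (pdy (pdy h)) p) + (-2)*(h p)^4*(pdx h p)^6*(pdy h p)*(pdy (pdx (pdx h)) p) + (-2)*(h p)^4*(pdx h p)^7*(pdy (pdx (pdy h)) p) + (-2)*(h p)^4*(pdx h p)^7*(pdx (pdx (pdx h)) p))) * hs0p + ((pdy h p)^4 + 2*(pdx h p)^2*(pdy h p)^2 + (pdx h p)^4) * hTc3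
  have hne2 : ((pdx h p) ^ 2 + (pdy h p) ^ 2) ^ 2 * (h p) ^ 4 ≠ 0 := by
    have h0 := hpos p hpU
    have hW0 : (0:ℝ) < (pdx h p) ^ 2 + (pdy h p) ^ 2 := hWpos p hpU
    positivity
  have hQ0 : (2 * (pdx h p * pdx (pdx h) p) + 2 * (pdy h p * pdx (pdy h) p)) ^ 2
      + (2 * (pdx h p * pdx (pdy h) p) + 2 * (pdy h p * pdy (pdy h) p)) ^ 2 = 0 :=
    (mul_eq_zero.mp hQ).resolve_right hne2
  have hGx : pdx h p * pdx (pdx h) p + pdy h p * pdx (pdy h) p = 0 := by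
    nlinarith [sq_nonneg (2 * (pdx h p * pdx (pdx h) p) + 2 * (pdy h p * pdx (pdy h) p)),
      sq_nonneg (2 * (pdx h p * pdx (pdy h) p) + 2 * (pdy h p * pdy (pdy h) p))]
  have hGy : pdx h p * pdx (pdy h) p + pdy h p * pdy (pdy h) p = 0 := by
    nlinarith [sq_nonneg (2 * (pdx h p * pdx (pdx h) p) + 2 * (pdy h p * pdx (pdy h) p)),
      sq_nonneg (2 * (pdx h p * pdx (pdy h) p) + 2 * (pdy h p * pdy (pdy h) p))]
  -- final contradiction
  have hfin : ((pdx h p) ^ 2 + (pdy h p) ^ 2) ^ 2 - ((pdx h p) ^ 2 + (pdy h p) ^ 2) = 0 := by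
    linear_combination ((h p)*(pdx h p)) * hGx + ((h p)*(pdy h p)) * hGy + (1 + (-1)*(pdy h p)^2 + (-1)*(pdx h p)^2) * hmodp + ((-1)*(h p)) * hzmc2p
  have htp := htime p hpU
  nlinarith [hfin, htp]
end

section
/- Let U ⊆ ℝ² be a connected open set, let H ≠ 0 be a real constant, and let h : U → ℝ be a smooth positive function satisfying both h_xx + h_yy = 2H and h_x² + h_y² = 2H·h on U. Then H > 0 and there exist real constants x₀, y₀ such that h(x, y) = (H/2)·((x − x₀)² + (y − y₀)²) for all (x, y) ∈ U. (Equivalently, h(x,y) = (H/2)(x² + y²) + a·x + b·y + (a² + b²)/(2H) for some real constants a, b.) -/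
lemma clm_eq_zero_of (L : ℝ × ℝ →L[ℝ] ℝ) (h1 : L (1, 0) = 0) (h2 : L (0, 1) = 0) : L = 0 := by
  refine ContinuousLinearMap.ext fun v => ?_
  have hv : (v : ℝ × ℝ) = v.1 • ((1 : ℝ), (0 : ℝ)) + v.2 • ((0 : ℝ), (1 : ℝ)) := by
    simp [Prod.ext_iff]
  rw [ContinuousLinearMap.zero_apply, hv, map_add, map_smul, map_smul, h1, h2]
  simp

lemma const_of_hasFDerivAt_zero {U : Set (ℝ × ℝ)} (hU : IsOpen U) (hUc : IsPreconnected U)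
    {f : ℝ × ℝ → ℝ} (hd : ∀ p ∈ U, HasFDerivAt f (0 : ℝ × ℝ →L[ℝ] ℝ) p) :
    ∀ p ∈ U, ∀ q ∈ U, f p = f q := by
  intro p hp q hq
  set c := f q with hc
  have key : ∀ r : ℝ, IsOpen {x | x ∈ U ∧ f x = r} := by
    intro r
    rw [isOpen_iff_forall_mem_open]
    rintro x ⟨hxU, hxr⟩
    obtain ⟨ε, hε, hball⟩ := Metric.isOpen_iff.1 hU x hxU
    refine ⟨Metric.ball x ε, ?_, Metric.isOpen_ball, Metric.mem_ball_self hε⟩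
    intro y hy
    refine ⟨hball hy, ?_⟩
    have hconst : f y = f x := by
      apply (convex_ball x ε).is_const_of_fderivWithin_eq_zero
        (fun z hz => ((hd z (hball hz)).differentiableAt.differentiableWithinAt))
        (fun z hz => ?_) hy (Metric.mem_ball_self hε)
      rw [fderivWithin_of_isOpen Metric.isOpen_ball hz, (hd z (hball hz)).fderiv]
    rw [hconst, hxr]
  have hopen1 : IsOpen {x | x ∈ U ∧ f x = c} := key c
  have hopen2 : IsOpen (⋃ r ∈ {r : ℝ | r ≠ c}, {x | x ∈ U ∧ f x = r}) :=
    isOpen_biUnion fun r _ => key r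
  have hsub : U ⊆ {x | x ∈ U ∧ f x = c} ∪ (⋃ r ∈ {r : ℝ | r ≠ c}, {x | x ∈ U ∧ f x = r}) := by
    intro x hx
    by_cases hxc : f x = c
    · exact Or.inl ⟨hx, hxc⟩
    · exact Or.inr (Set.mem_biUnion hxc ⟨hx, rfl⟩)
  have hdisj : Disjoint {x | x ∈ U ∧ f x = c} (⋃ r ∈ {r : ℝ | r ≠ c}, {x | x ∈ U ∧ f x = r}) := by
    rw [Set.disjoint_left]
    rintro x ⟨_, hxc⟩ hx2
    simp only [Set.mem_iUnion, Set.mem_setOf_eq] at hx2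
    obtain ⟨r, hr, _, hxr⟩ := hx2
    exact hr (hxr ▸ hxc)
  have := hUc.subset_left_of_subset_union hopen1 hopen2 hdisj hsub ⟨q, hq, hq, rfl⟩
  exact (this hp).2

set_option maxHeartbeats 1000000 in
/-- Classification of nonzero CMC modular surfaces: if a smooth positive `h` on a
connected open `U ⊆ ℝ²` satisfies `h_xx + h_yy = 2H` and `h_x² + h_y² = 2H·h` for a
nonzero constant `H`, then `H > 0` and
`h(x,y) = (H/2)((x - x₀)² + (y - y₀)²)` for some constants `x₀, y₀`. -/
theorem cmc_modular_classification
    (U : Set (ℝ × ℝ)) (hU : IsOpen U) (hUconn : IsConnected U)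
    (H : ℝ) (hH : H ≠ 0)
    (h : ℝ × ℝ → ℝ) (hsm : ContDiffOn ℝ (⊤ : ℕ∞) h U)
    (hpos : ∀ p ∈ U, 0 < h p)
    (hlap : ∀ p ∈ U, pdx (pdx h) p + pdy (pdy h) p = 2 * H)
    (hgrad : ∀ p ∈ U, (pdx h p) ^ 2 + (pdy h p) ^ 2 = 2 * H * h p) :
    0 < H ∧ ∃ x₀ y₀ : ℝ, ∀ p ∈ U,
      h p = (H / 2) * ((p.1 - x₀) ^ 2 + (p.2 - y₀) ^ 2) := by
  obtain ⟨p₀, hp₀⟩ := hUconn.nonempty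
  have hHpos : 0 < H := by
    rcases lt_or_gt_of_ne hH with hneg | hp
    · exfalso
      have h1 := hgrad p₀ hp₀
      have h2 := hpos p₀ hp₀
      nlinarith [sq_nonneg (pdx h p₀), sq_nonneg (pdy h p₀)]
    · exact hp
  refine ⟨hHpos, ?_⟩
  -- differentiability facts
  have hdiff : ∀ p ∈ U, DifferentiableAt ℝ h p :=
    fun p hp => (hsm.contDiffAt (hU.mem_nhds hp)).differentiableAt (by simp)
  have hF : ∀ p ∈ U, ContDiffAt ℝ (⊤ : ℕ∞) (fderiv ℝ h) p :=
    fun p hp => (hsm.contDiffAt (hU.mem_nhds hp)).fderiv_right (by simp)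
  have hdF : ∀ p ∈ U, DifferentiableAt ℝ (fderiv ℝ h) p :=
    fun p hp => (hF p hp).differentiableAt (by simp)
  have hdw : ∀ p ∈ U, ∀ w : ℝ × ℝ, DifferentiableAt ℝ (fun q => fderiv ℝ h q w) p :=
    fun p hp w => ((hF p hp).clm_apply contDiffAt_const).differentiableAt (by simp)
  have hdx : ∀ p ∈ U, DifferentiableAt ℝ (pdx h) p := fun p hp => hdw p hp (1, 0)
  have hdy : ∀ p ∈ U, DifferentiableAt ℝ (pdy h) p := fun p hp => hdw p hp (0, 1)
  -- second-derivative representation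
  have hsecond : ∀ p ∈ U, ∀ w : ℝ × ℝ,
      HasFDerivAt (fun q => fderiv ℝ h q w)
        ((ContinuousLinearMap.apply ℝ ℝ w).comp (fderiv ℝ (fderiv ℝ h) p)) p :=
    fun p hp w => (ContinuousLinearMap.apply ℝ ℝ w).hasFDerivAt.comp p (hdF p hp).hasFDerivAt
  have hmixed : ∀ p ∈ U, ∀ v w : ℝ × ℝ,
      fderiv ℝ (fun q => fderiv ℝ h q w) p v = fderiv ℝ (fderiv ℝ h) p v w := by
    intro p hp v w
    rw [(hsecond p hp w).fderiv]
    rfl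
  have hsymm : ∀ p ∈ U, ∀ v w : ℝ × ℝ,
      fderiv ℝ (fderiv ℝ h) p v w = fderiv ℝ (fderiv ℝ h) p w v := by
    intro p hp v w
    refine second_derivative_symmetric_of_eventually (f := h) ?_ (hdF p hp).hasFDerivAt v w
    filter_upwards [hU.mem_nhds hp] with q hq using (hdiff q hq).hasFDerivAt
  -- differentiated gradient equation
  have hgradeq : ∀ p ∈ U, ∀ v : ℝ × ℝ,
      2 * pdx h p * fderiv ℝ (pdx h) p v + 2 * pdy h p * fderiv ℝ (pdy h) p v
        = 2 * H * fderiv ℝ h p v := by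
    intro p hp v
    have hEq : (fun q => pdx h q * pdx h q + pdy h q * pdy h q) =ᶠ[nhds p]
        (fun q => 2 * H * h q) := by
      filter_upwards [hU.mem_nhds hp] with q hq
      have := hgrad q hq
      nlinarith [this]
    have hL : HasFDerivAt (fun q => pdx h q * pdx h q + pdy h q * pdy h q)
        ((pdx h p • fderiv ℝ (pdx h) p + pdx h p • fderiv ℝ (pdx h) p) +
          (pdy h p • fderiv ℝ (pdy h) p + pdy h p • fderiv ℝ (pdy h) p)) p :=
      ((hdx p hp).hasFDerivAt.mul (hdx p hp).hasFDerivAt).add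
        ((hdy p hp).hasFDerivAt.mul (hdy p hp).hasFDerivAt)
    have hR : HasFDerivAt (fun q => 2 * H * h q) ((2 * H) • fderiv ℝ h p) p :=
      (hdiff p hp).hasFDerivAt.const_mul (2 * H)
    have heq2 : fderiv ℝ (fun q => pdx h q * pdx h q + pdy h q * pdy h q) p
        = fderiv ℝ (fun q => 2 * H * h q) p := hEq.fderiv_eq
    rw [hL.fderiv, hR.fderiv] at heq2
    have := congrArg (fun L : ℝ × ℝ →L[ℝ] ℝ => L v) heq2
    simp only [ContinuousLinearMap.add_apply, ContinuousLinearMap.smul_apply,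
      smul_eq_mul] at this
    ring_nf at this ⊢
    linarith [this]
  -- Hessian is H • Id
  have hhess : ∀ p ∈ U, fderiv ℝ (fderiv ℝ h) p (1, 0) (1, 0) = H ∧
      fderiv ℝ (fderiv ℝ h) p (1, 0) (0, 1) = 0 ∧
      fderiv ℝ (fderiv ℝ h) p (0, 1) (0, 1) = H := by
    intro p hp
    set a11 := fderiv ℝ (fderiv ℝ h) p (1, 0) (1, 0) with ha11
    set a12 := fderiv ℝ (fderiv ℝ h) p (1, 0) (0, 1) with ha12
    set a21 := fderiv ℝ (fderiv ℝ h) p (0, 1) (1, 0) with ha21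
    set a22 := fderiv ℝ (fderiv ℝ h) p (0, 1) (0, 1) with ha22
    set f1 := pdx h p with hf1
    set f2 := pdy h p with hf2
    have hsy : a21 = a12 := hsymm p hp (0, 1) (1, 0)
    have e1 : 2 * f1 * a11 + 2 * f2 * a12 = 2 * H * f1 := by
      have := hgradeq p hp (1, 0)
      rw [show fderiv ℝ (pdx h) p (1, 0) = a11 from hmixed p hp (1, 0) (1, 0),
        show fderiv ℝ (pdy h) p (1, 0) = a12 from hmixed p hp (1, 0) (0, 1)] at this
      exact this
    have e2 : 2 * f1 * a12 + 2 * f2 * a22 = 2 * H * f2 := by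
      have := hgradeq p hp (0, 1)
      rw [show fderiv ℝ (pdx h) p (0, 1) = a12 from (hmixed p hp (0, 1) (1, 0)).trans hsy,
        show fderiv ℝ (pdy h) p (0, 1) = a22 from hmixed p hp (0, 1) (0, 1)] at this
      exact this
    have etr : a11 + a22 = 2 * H := by
      have := hlap p hp
      rw [show pdx (pdx h) p = a11 from hmixed p hp (1, 0) (1, 0),
        show pdy (pdy h) p = a22 from hmixed p hp (0, 1) (0, 1)] at this
      exact this
    have hg : f1 ^ 2 + f2 ^ 2 = 2 * H * h p := hgrad p hp
    have hhp : 0 < h p := hpos p hp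
    have key : (f1 ^ 2 + f2 ^ 2) * ((a11 - H) ^ 2 + a12 ^ 2) = 0 := by
      have c1 : f1 * (a11 - H) + f2 * a12 = 0 := by linarith [e1]
      have c2 : f1 * a12 - f2 * (a11 - H) = 0 := by
        have : f1 * a12 + f2 * a22 = H * f2 := by linarith [e2]
        have ha22' : a22 = 2 * H - a11 := by linarith [etr]
        rw [ha22'] at this
        ring_nf at this ⊢
        linarith [this]
      nlinarith [c1, c2, sq_nonneg (f1 * (a11 - H) + f2 * a12),
        sq_nonneg (f1 * a12 - f2 * (a11 - H))]
    have hzero : (a11 - H) ^ 2 + a12 ^ 2 = 0 := by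
      have hne : f1 ^ 2 + f2 ^ 2 > 0 := by nlinarith
      have := mul_eq_zero.1 key
      rcases this with h' | h'
      · linarith
      · exact h'
    have h11 : a11 = H := by nlinarith [sq_nonneg (a11 - H), sq_nonneg a12]
    have h12 : a12 = 0 := by nlinarith [sq_nonneg (a11 - H), sq_nonneg a12]
    exact ⟨h11, h12, by linarith⟩
  -- clean partial-derivative facts
  have hd11 : ∀ p ∈ U, fderiv ℝ (pdx h) p (1, 0) = H :=
    fun p hp => (hmixed p hp (1, 0) (1, 0)).trans (hhess p hp).1
  have hd12 : ∀ p ∈ U, fderiv ℝ (pdx h) p (0, 1) = 0 :=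
    fun p hp => ((hmixed p hp (0, 1) (1, 0)).trans (hsymm p hp (0, 1) (1, 0))).trans
      (hhess p hp).2.1
  have hd21 : ∀ p ∈ U, fderiv ℝ (pdy h) p (1, 0) = 0 :=
    fun p hp => (hmixed p hp (1, 0) (0, 1)).trans (hhess p hp).2.1
  have hd22 : ∀ p ∈ U, fderiv ℝ (pdy h) p (0, 1) = H :=
    fun p hp => (hmixed p hp (0, 1) (0, 1)).trans (hhess p hp).2.2
  -- pdx h - H x and pdy h - H y are constant
  have hz1 : ∀ p ∈ U, HasFDerivAt (fun q : ℝ × ℝ => pdx h q - H * q.1)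
      (0 : ℝ × ℝ →L[ℝ] ℝ) p := by
    intro p hp
    have h2 : HasFDerivAt (fun q : ℝ × ℝ => H * q.1)
        (H • ContinuousLinearMap.fst ℝ ℝ ℝ) p := hasFDerivAt_fst.const_mul H
    have h3 := (hdx p hp).hasFDerivAt.sub h2
    have hL0 : fderiv ℝ (pdx h) p - H • ContinuousLinearMap.fst ℝ ℝ ℝ = 0 := by
      apply clm_eq_zero_of
      · simp only [ContinuousLinearMap.sub_apply, ContinuousLinearMap.smul_apply,
          ContinuousLinearMap.coe_fst', smul_eq_mul, hd11 p hp]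
        norm_num
      · simp only [ContinuousLinearMap.sub_apply, ContinuousLinearMap.smul_apply,
          ContinuousLinearMap.coe_fst', smul_eq_mul, hd12 p hp]
        norm_num
    rwa [hL0] at h3
  have hz2 : ∀ p ∈ U, HasFDerivAt (fun q : ℝ × ℝ => pdy h q - H * q.2)
      (0 : ℝ × ℝ →L[ℝ] ℝ) p := by
    intro p hp
    have h2 : HasFDerivAt (fun q : ℝ × ℝ => H * q.2)
        (H • ContinuousLinearMap.snd ℝ ℝ ℝ) p := hasFDerivAt_snd.const_mul H
    have h3 := (hdy p hp).hasFDerivAt.sub h2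
    have hL0 : fderiv ℝ (pdy h) p - H • ContinuousLinearMap.snd ℝ ℝ ℝ = 0 := by
      apply clm_eq_zero_of
      · simp only [ContinuousLinearMap.sub_apply, ContinuousLinearMap.smul_apply,
          ContinuousLinearMap.coe_snd', smul_eq_mul, hd21 p hp]
        norm_num
      · simp only [ContinuousLinearMap.sub_apply, ContinuousLinearMap.smul_apply,
          ContinuousLinearMap.coe_snd', smul_eq_mul, hd22 p hp]
        norm_num
    rwa [hL0] at h3
  set a := pdx h p₀ - H * p₀.1 with hadef
  set b := pdy h p₀ - H * p₀.2 with hbdef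
  have hda : ∀ p ∈ U, pdx h p = H * p.1 + a := by
    intro p hp
    have := const_of_hasFDerivAt_zero hU hUconn.isPreconnected hz1 p hp p₀ hp₀
    beta_reduce at this
    linarith [this]
  have hdb : ∀ p ∈ U, pdy h p = H * p.2 + b := by
    intro p hp
    have := const_of_hasFDerivAt_zero hU hUconn.isPreconnected hz2 p hp p₀ hp₀
    beta_reduce at this
    linarith [this]
  -- h minus the quadratic is constant
  set Q : ℝ × ℝ → ℝ :=
    fun p => H / 2 * (p.1 * p.1) + H / 2 * (p.2 * p.2) + a * p.1 + b * p.2 with hQdef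
  have hzQ : ∀ p ∈ U, HasFDerivAt (fun q : ℝ × ℝ => h q - Q q) (0 : ℝ × ℝ →L[ℝ] ℝ) p := by
    intro p hp
    have h1 : HasFDerivAt (fun q : ℝ × ℝ => q.1) (ContinuousLinearMap.fst ℝ ℝ ℝ) p :=
      hasFDerivAt_fst
    have h2 : HasFDerivAt (fun q : ℝ × ℝ => q.2) (ContinuousLinearMap.snd ℝ ℝ ℝ) p :=
      hasFDerivAt_snd
    have hQd : HasFDerivAt Q
        (((H / 2) • (p.1 • ContinuousLinearMap.fst ℝ ℝ ℝ + p.1 • ContinuousLinearMap.fst ℝ ℝ ℝ)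
          + (H / 2) • (p.2 • ContinuousLinearMap.snd ℝ ℝ ℝ + p.2 • ContinuousLinearMap.snd ℝ ℝ ℝ)
          + a • ContinuousLinearMap.fst ℝ ℝ ℝ) + b • ContinuousLinearMap.snd ℝ ℝ ℝ) p :=
      ((((h1.mul h1).const_mul (H / 2)).add ((h2.mul h2).const_mul (H / 2))).add
        (h1.const_mul a)).add (h2.const_mul b)
    have h3 := (hdiff p hp).hasFDerivAt.sub hQd
    have hL0 : fderiv ℝ h p -
        (((H / 2) • (p.1 • ContinuousLinearMap.fst ℝ ℝ ℝ + p.1 • ContinuousLinearMap.fst ℝ ℝ ℝ)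
          + (H / 2) • (p.2 • ContinuousLinearMap.snd ℝ ℝ ℝ + p.2 • ContinuousLinearMap.snd ℝ ℝ ℝ)
          + a • ContinuousLinearMap.fst ℝ ℝ ℝ) + b • ContinuousLinearMap.snd ℝ ℝ ℝ) = 0 := by
      apply clm_eq_zero_of
      · have hx : fderiv ℝ h p (1, 0) = H * p.1 + a := hda p hp
        simp only [ContinuousLinearMap.sub_apply, ContinuousLinearMap.add_apply,
          ContinuousLinearMap.smul_apply, ContinuousLinearMap.coe_fst',
          ContinuousLinearMap.coe_snd', smul_eq_mul, hx]
        norm_num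
        ring
      · have hy : fderiv ℝ h p (0, 1) = H * p.2 + b := hdb p hp
        simp only [ContinuousLinearMap.sub_apply, ContinuousLinearMap.add_apply,
          ContinuousLinearMap.smul_apply, ContinuousLinearMap.coe_fst',
          ContinuousLinearMap.coe_snd', smul_eq_mul, hy]
        norm_num
        ring
    rwa [hL0] at h3
  set c := h p₀ - Q p₀ with hcdef
  have hhQ : ∀ p ∈ U, h p = Q p + c := by
    intro p hp
    have := const_of_hasFDerivAt_zero hU hUconn.isPreconnected hzQ p hp p₀ hp₀
    beta_reduce at this
    linarith [this]
  -- the constant relation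
  have hc2 : 2 * H * c = a ^ 2 + b ^ 2 := by
    have hg := hgrad p₀ hp₀
    rw [hda p₀ hp₀, hdb p₀ hp₀, hhQ p₀ hp₀] at hg
    simp only [hQdef] at hg
    linear_combination -hg
  refine ⟨-a / H, -b / H, ?_⟩
  intro p hp
  rw [hhQ p hp]
  simp only [hQdef]
  have hcc : c = (a ^ 2 + b ^ 2) / (2 * H) := by
    field_simp
    linarith [hc2]
  rw [hcc]
  field_simp
  ring
end

section
/- There is no smooth positive function h : ℝ² → ℝ satisfying h·(h_xx + h_yy) = h_x² + h_y² on ℝ², h_xx·h_yy − h_xy² > 0 everywhere, and such that the Gaussian curvature K = (h_xx·h_yy − h_xy²)/(1 + h·(h_xx + h_yy))² is constant on ℝ². In other words, there exists no constant (positive) Gaussian curvature complete convex modular graph in Euclidean 3-space. -/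
lemma fderiv_apply_basis (f : ℝ × ℝ → ℝ) (p : ℝ × ℝ) (v : ℝ × ℝ) :
    fderiv ℝ f p v = v.1 * pdx f p + v.2 * pdy f p := by
  have hv : v = v.1 • ((1:ℝ), (0:ℝ)) + v.2 • ((0:ℝ), (1:ℝ)) := by
    simp [Prod.ext_iff]
  rw [hv, map_add, map_smul, map_smul]
  simp [pdx, pdy, smul_eq_mul]

lemma contDiff_pdx {f : ℝ × ℝ → ℝ} (hf : ContDiff ℝ (⊤ : ℕ∞) f) : ContDiff ℝ (⊤ : ℕ∞) (pdx f) :=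
  (hf.fderiv_right (by simp)).clm_apply contDiff_const

lemma contDiff_pdy {f : ℝ × ℝ → ℝ} (hf : ContDiff ℝ (⊤ : ℕ∞) f) : ContDiff ℝ (⊤ : ℕ∞) (pdy f) :=
  (hf.fderiv_right (by simp)).clm_apply contDiff_const

lemma fderiv_pdx_apply {f : ℝ × ℝ → ℝ} (hf : ContDiff ℝ (⊤ : ℕ∞) f) (p w : ℝ × ℝ) :
    fderiv ℝ (pdx f) p w = (fderiv ℝ (fderiv ℝ f) p w) (1, 0) := by
  have hd : DifferentiableAt ℝ (fderiv ℝ f) p :=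
    ((hf.fderiv_right (m := (⊤ : ℕ∞)) (by simp)).differentiable (by simp)) p
  have := fderiv_clm_apply (c := fderiv ℝ f) (u := fun _ => ((1:ℝ),(0:ℝ))) hd
    (differentiableAt_const _)
  rw [show pdx f = fun q => fderiv ℝ f q (1,0) from rfl, this]
  simp

lemma fderiv_pdy_apply {f : ℝ × ℝ → ℝ} (hf : ContDiff ℝ (⊤ : ℕ∞) f) (p w : ℝ × ℝ) :
    fderiv ℝ (pdy f) p w = (fderiv ℝ (fderiv ℝ f) p w) (0, 1) := by
  have hd : DifferentiableAt ℝ (fderiv ℝ f) p :=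
    ((hf.fderiv_right (m := (⊤ : ℕ∞)) (by simp)).differentiable (by simp)) p
  have := fderiv_clm_apply (c := fderiv ℝ f) (u := fun _ => ((0:ℝ),(1:ℝ))) hd
    (differentiableAt_const _)
  rw [show pdy f = fun q => fderiv ℝ f q (0,1) from rfl, this]
  simp

lemma pdx_pdy_symm {f : ℝ × ℝ → ℝ} (hf : ContDiff ℝ (⊤ : ℕ∞) f) (p : ℝ × ℝ) :
    pdx (pdy f) p = pdy (pdx f) p := by
  have hd : ∀ y, HasFDerivAt f (fderiv ℝ f y) y := fun y =>
    ((hf.differentiable (by simp)) y).hasFDerivAt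
  have hd2 : HasFDerivAt (fderiv ℝ f) (fderiv ℝ (fderiv ℝ f) p) p :=
    (((hf.fderiv_right (m := (⊤ : ℕ∞)) (by simp)).differentiable (by simp)) p).hasFDerivAt
  have hsymm := second_derivative_symmetric hd hd2 (1,0) (0,1)
  rw [pdx, pdy, fderiv_pdy_apply hf, fderiv_pdx_apply hf, hsymm]

lemma clm_det_formula (f : (ℝ × ℝ) →L[ℝ] (ℝ × ℝ)) :
    f.det = (f (1, 0)).1 * (f (0, 1)).2 - (f (0, 1)).1 * (f (1, 0)).2 := by
  have : f.det = LinearMap.det (f : (ℝ × ℝ) →ₗ[ℝ] (ℝ × ℝ)) := rfl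
  rw [this, ← LinearMap.det_toMatrix (Module.Basis.finTwoProd ℝ), Matrix.det_fin_two]
  simp [LinearMap.toMatrix_apply, Module.Basis.finTwoProd_zero, Module.Basis.finTwoProd_one]

/-- There exists no constant Gaussian curvature complete convex modular graph in
Euclidean 3-space. -/
theorem no_constant_curvature_convex_modular :
    ¬ ∃ (h : ℝ × ℝ → ℝ) (c : ℝ), ContDiff ℝ (⊤ : ℕ∞) h ∧
      (∀ p, 0 < h p) ∧
      (∀ p,
        h p * (pdx (pdx h) p + pdy (pdy h) p) = (pdx h p) ^ 2 + (pdy h p) ^ 2) ∧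
      (∀ p, 0 < pdx (pdx h) p * pdy (pdy h) p - (pdy (pdx h) p) ^ 2) ∧
      (∀ p,
        (pdx (pdx h) p * pdy (pdy h) p - (pdy (pdx h) p) ^ 2) /
          (1 + h p * (pdx (pdx h) p + pdy (pdy h) p)) ^ 2 = c) := by
  rintro ⟨h, c, hsm, hpos, hpde, hdet, hK⟩
  -- trace nonnegative, in fact 1 + h * trace ≥ 1
  have htr : ∀ p, 0 ≤ pdx (pdx h) p + pdy (pdy h) p := by
    intro p
    have h1 := hpde p
    have h2 := hpos p
    nlinarith [sq_nonneg (pdx h p), sq_nonneg (pdy h p)]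
  have hxx_pos : ∀ p, 0 < pdx (pdx h) p := by
    intro p
    by_contra hcon
    push_neg at hcon
    nlinarith [hdet p, sq_nonneg (pdy (pdx h) p), htr p]
  -- quadratic form positivity
  have hQ : ∀ (p : ℝ × ℝ) (v : ℝ × ℝ), v ≠ 0 →
      0 < v.1 ^ 2 * pdx (pdx h) p + 2 * v.1 * v.2 * pdy (pdx h) p
        + v.2 ^ 2 * pdy (pdy h) p := by
    intro p v hv
    rcases eq_or_ne v.2 0 with h2 | h2
    · have h1 : v.1 ≠ 0 := by
        intro h1; exact hv (Prod.ext h1 h2)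
      have := hxx_pos p
      rw [h2]
      have : 0 < v.1 ^ 2 * pdx (pdx h) p := by positivity
      nlinarith
    · have hv2 : 0 < v.2 ^ 2 := by positivity
      nlinarith [sq_nonneg (pdx (pdx h) p * v.1 + pdy (pdx h) p * v.2),
        mul_pos (hdet p) hv2, hxx_pos p, hdet p]
  -- the gradient map
  set G : ℝ × ℝ → ℝ × ℝ := fun p => (pdx h p, pdy h p) with hG_def
  have hpdx_diff : Differentiable ℝ (pdx h) := (contDiff_pdx hsm).differentiable (by simp)
  have hpdy_diff : Differentiable ℝ (pdy h) := (contDiff_pdy hsm).differentiable (by simp)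
  -- second derivative entries
  have hfd_x : ∀ p (v : ℝ × ℝ), fderiv ℝ (pdx h) p v
      = v.1 * pdx (pdx h) p + v.2 * pdy (pdx h) p := by
    intro p v; exact fderiv_apply_basis (pdx h) p v
  have hfd_y : ∀ p (v : ℝ × ℝ), fderiv ℝ (pdy h) p v
      = v.1 * pdy (pdx h) p + v.2 * pdy (pdy h) p := by
    intro p v
    rw [fderiv_apply_basis (pdy h) p v, pdx_pdy_symm hsm]
  -- injectivity of G
  have hinj : Set.InjOn G Set.univ := by
    intro a _ b _ hab
    by_contra hne
    set v : ℝ × ℝ := a - b with hv_def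
    have hv : v ≠ 0 := sub_ne_zero.mpr hne
    set l : ℝ → ℝ × ℝ := fun t => b + t • v with hl_def
    set ψ : ℝ → ℝ := fun t => v.1 * pdx h (l t) + v.2 * pdy h (l t) with hψ_def
    have hl : ∀ t, HasDerivAt l v t := by
      intro t
      have : HasDerivAt (fun t : ℝ => t • v) ((1:ℝ) • v) t :=
        (hasDerivAt_id t).smul_const v
      simpa [hl_def] using this.const_add b
    have hψ : ∀ t, HasDerivAt ψ
        (v.1 ^ 2 * pdx (pdx h) (l t) + 2 * v.1 * v.2 * pdy (pdx h) (l t)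
          + v.2 ^ 2 * pdy (pdy h) (l t)) t := by
      intro t
      have h1 : HasDerivAt (fun t => pdx h (l t)) (fderiv ℝ (pdx h) (l t) v) t :=
        (hpdx_diff (l t)).hasFDerivAt.comp_hasDerivAt t (hl t)
      have h2 : HasDerivAt (fun t => pdy h (l t)) (fderiv ℝ (pdy h) (l t) v) t :=
        (hpdy_diff (l t)).hasFDerivAt.comp_hasDerivAt t (hl t)
      have := ((h1.const_mul v.1).add (h2.const_mul v.2))
      rw [hfd_x, hfd_y] at this
      convert this using 1
      exacts [rfl, rfl, rfl, by ring]
    have hmono : StrictMono ψ := by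
      apply strictMono_of_deriv_pos
      intro t
      rw [(hψ t).deriv]
      exact hQ (l t) v hv
    have h01 : ψ 0 < ψ 1 := hmono zero_lt_one
    have hl0 : l 0 = b := by simp [hl_def]
    have hl1 : l 1 = a := by simp [hl_def, hv_def]
    have hpx : pdx h a = pdx h b := congrArg Prod.fst hab
    have hpy : pdy h a = pdy h b := congrArg Prod.snd hab
    rw [hψ_def] at h01
    simp only [hl0, hl1, hpx, hpy] at h01
    exact lt_irrefl _ h01
  -- derivative of G
  set A : ℝ × ℝ → (ℝ × ℝ) →L[ℝ] (ℝ × ℝ) :=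
    fun p => (fderiv ℝ (pdx h) p).prod (fderiv ℝ (pdy h) p) with hA_def
  have hGder : ∀ p, HasFDerivAt G (A p) p := fun p =>
    ((hpdx_diff p).hasFDerivAt).prodMk ((hpdy_diff p).hasFDerivAt)
  have hAdet : ∀ p, (A p).det
      = pdx (pdx h) p * pdy (pdy h) p - (pdy (pdx h) p) ^ 2 := by
    intro p
    rw [clm_det_formula]
    simp only [hA_def, ContinuousLinearMap.prod_apply]
    rw [hfd_x p (1,0), hfd_x p (0,1), hfd_y p (1,0), hfd_y p (0,1)]
    ring
  -- positivity of c
  have hden : ∀ p, 0 < 1 + h p * (pdx (pdx h) p + pdy (pdy h) p) := by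
    intro p
    rw [hpde p]
    positivity
  have hc : 0 < c := by
    rw [← hK 0]
    exact div_pos (hdet 0) (pow_pos (hden 0) 2)
  -- the key pointwise identity
  have hkey : ∀ p, pdx (pdx h) p * pdy (pdy h) p - (pdy (pdx h) p) ^ 2
      = c * (1 + (pdx h p) ^ 2 + (pdy h p) ^ 2) ^ 2 := by
    intro p
    have := hK p
    rw [div_eq_iff (ne_of_gt (pow_pos (hden p) 2))] at this
    rw [this, hpde p]
    ring
  -- measure-theoretic contradiction
  set g : ℝ × ℝ → ENNReal := fun y => ENNReal.ofReal ((1 + ‖y‖) ^ (-(4:ℝ))) with hg_def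
  have hgint : MeasureTheory.Integrable (fun y : ℝ × ℝ => (1 + ‖y‖) ^ (-(4:ℝ))) := by
    apply integrable_one_add_norm
    simp
    norm_num
  have hfin : ∫⁻ y, g y < ⊤ := hgint.lintegral_lt_top
  have hcov := MeasureTheory.lintegral_image_eq_lintegral_abs_det_fderiv_mul
    (μ := MeasureTheory.volume) MeasurableSet.univ
    (fun x _ => (hGder x).hasFDerivWithinAt) hinj g
  have hle : ∫⁻ x in G '' Set.univ, g x ∂MeasureTheory.volume ≤ ∫⁻ y, g y :=
    MeasureTheory.setLIntegral_le_lintegral _ _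
  -- pointwise lower bound on the transformed integrand
  have hlow : ∀ x, ENNReal.ofReal (c / 4)
      ≤ ENNReal.ofReal |(A x).det| * g (G x) := by
    intro x
    have hdetpos := hdet x
    have hAx : |(A x).det| = pdx (pdx h) x * pdy (pdy h) x - (pdy (pdx h) x) ^ 2 := by
      rw [hAdet x, abs_of_pos hdetpos]
    set m : ℝ := ‖G x‖ with hm_def
    have hm0 : 0 ≤ m := norm_nonneg _
    have hmsq : m ^ 2 ≤ pdx h x ^ 2 + pdy h x ^ 2 := by
      have : m = max ‖pdx h x‖ ‖pdy h x‖ := rfl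
      rw [this]
      rcases max_cases ‖pdx h x‖ ‖pdy h x‖ with ⟨he, _⟩ | ⟨he, _⟩ <;>
        rw [he] <;> simp [sq_abs, Real.norm_eq_abs] <;> nlinarith [sq_nonneg (pdx h x), sq_nonneg (pdy h x), sq_abs (pdx h x), sq_abs (pdy h x)]
    have hgx : g (G x) = ENNReal.ofReal (((1 + m) ^ (4:ℕ))⁻¹) := by
      rw [hg_def]
      congr 1
      rw [← Real.rpow_natCast (1 + m) 4, ← Real.rpow_neg (by linarith)]
      norm_num
      rfl
    rw [hgx, hAx, hkey x, ← ENNReal.ofReal_mul (by positivity)]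
    apply ENNReal.ofReal_le_ofReal
    have hb : (1 + m) ^ (4:ℕ) ≤ 4 * (1 + pdx h x ^ 2 + pdy h x ^ 2) ^ 2 := by
      nlinarith [sq_nonneg (1 - m), sq_nonneg ((1+m)^2 - 2*(1 + pdx h x ^ 2 + pdy h x ^ 2)),
        sq_nonneg m, sq_nonneg (pdx h x), sq_nonneg (pdy h x)]
    have hp4 : (0:ℝ) < (1 + m) ^ (4:ℕ) := by positivity
    have h1 : c / 4 ≤ c * (1 + pdx h x ^ 2 + pdy h x ^ 2) ^ 2 / (1 + m) ^ (4:ℕ) := by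
      rw [div_le_div_iff₀ (by norm_num) hp4]
      nlinarith [mul_le_mul_of_nonneg_left hb (le_of_lt hc)]
    calc c / 4 ≤ c * (1 + pdx h x ^ 2 + pdy h x ^ 2) ^ 2 / (1 + m) ^ (4:ℕ) := h1
      _ = c * (1 + pdx h x ^ 2 + pdy h x ^ 2) ^ 2 * ((1 + m) ^ (4:ℕ))⁻¹ :=
          div_eq_mul_inv _ _
  -- put it all together
  have hbig : (⊤ : ENNReal) ≤ ∫⁻ x in Set.univ,
      ENNReal.ofReal |(A x).det| * g (G x) ∂MeasureTheory.volume := by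
    rw [MeasureTheory.Measure.restrict_univ]
    calc (⊤ : ENNReal) = ∫⁻ _ : ℝ × ℝ, ENNReal.ofReal (c / 4) := by
          rw [MeasureTheory.lintegral_const,
            MeasureTheory.measure_univ_of_isAddLeftInvariant]
          rw [ENNReal.mul_top]
          simp [ENNReal.ofReal_eq_zero]
          linarith
        _ ≤ _ := MeasureTheory.lintegral_mono hlow
  rw [← hcov] at hbig
  exact absurd (lt_of_le_of_lt (le_trans hbig hle) hfin) (lt_irrefl ⊤)
end

section
/- Let U ⊆ ℝ² be open and let h : U → ℝ be a smooth positive function with h·(h_xx + h_yy) = h_x² + h_y² on U. Then at every point of U where h_xx·h_yy − h_xy² > 0, one has (h_xx·h_yy − h_xy²)/(1 + h·(h_xx + h_yy))² < 1/(2h²); that is, the Gaussian curvature K of the convex modular graph satisfies 0 < K < 1/(2h²). -/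
/-- Pointwise curvature bound for convex modular graphs: wherever the Hessian
determinant is positive, the Gaussian curvature satisfies `0 < K < 1/(2h²)`. -/
theorem gauss_curvature_bound_convex_modular
    (U : Set (ℝ × ℝ)) (hU : IsOpen U)
    (h : ℝ × ℝ → ℝ) (hsm : ContDiffOn ℝ (⊤ : ℕ∞) h U)
    (hpos : ∀ p ∈ U, 0 < h p)
    (hlog : ∀ p ∈ U,
      h p * (pdx (pdx h) p + pdy (pdy h) p) = (pdx h p) ^ 2 + (pdy h p) ^ 2) :
    ∀ p ∈ U, 0 < pdx (pdx h) p * pdy (pdy h) p - (pdy (pdx h) p) ^ 2 →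
      (pdx (pdx h) p * pdy (pdy h) p - (pdy (pdx h) p) ^ 2) /
          (1 + h p * (pdx (pdx h) p + pdy (pdy h) p)) ^ 2
        < 1 / (2 * (h p) ^ 2) := by
  intro p hp hdet
  have h1 : 0 < h p := hpos p hp
  have h2 := hlog p hp
  set a := pdx (pdx h) p
  set b := pdy (pdx h) p
  set c := pdy (pdy h) p
  have hH : 0 ≤ h p * (a + c) := by
    rw [h2]; positivity
  have hden : 0 < (1 + h p * (a + c)) ^ 2 := by positivity
  rw [div_lt_div_iff₀ hden (by positivity)]
  nlinarith [sq_nonneg (a - c), sq_nonneg (h p * (a + c)), mul_pos h1 h1, hH, hdet,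
    mul_pos (mul_pos h1 h1) hdet]
end

section
/- Let D ⊆ ℂ be open, let F be holomorphic on D, and define h : D → ℝ by h(x + iy) = |F(x + iy)| (the complex modulus). Then at every point z ∈ D with F(z) ≠ 0, the function h is smooth in a neighbourhood of z and satisfies both identities: (i) h·(h_xx + h_yy) = h_x² + h_y², and (ii) h_x² + h_y² = |F'(z)|². Consequently, the modular surface (x, y, h(x,y)) in Lorentz–Minkowski space 𝔼₁³ is spacelike at z if |F'(z)| < 1, timelike if |F'(z)| > 1, and lightlike (degenerate) if |F'(z)| = 1. -/
/-- Partial derivative in the `x` direction for functions on `ℂ ≅ ℝ²`. -/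
noncomputable def cpdx (f : ℂ → ℝ) (z : ℂ) : ℝ := fderiv ℝ f z 1

/-- Partial derivative in the `y` direction for functions on `ℂ ≅ ℝ²`. -/
noncomputable def cpdy (f : ℂ → ℝ) (z : ℂ) : ℝ := fderiv ℝ f z Complex.I

open ContinuousLinearMap in
set_option maxHeartbeats 1000000 in
/-- For `F` holomorphic on an open set `D` and `h = |F|`, at every point of `D` where
`F ≠ 0` the height function `h` is smooth and satisfies
`h(h_xx + h_yy) = h_x² + h_y²` and `h_x² + h_y² = |F'|²`; consequently, the sign of
the determinant `1 - h_x² - h_y²` of the induced metric from Lorentz-Minkowski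
3-space (positive: spacelike, negative: timelike, zero: lightlike) is governed by
whether `|F'|` is less than, greater than, or equal to `1`. -/
theorem modular_height_identities
    (D : Set ℂ) (hD : IsOpen D) (F : ℂ → ℂ) (hF : DifferentiableOn ℂ F D)
    (h : ℂ → ℝ) (hdef : ∀ z, h z = ‖F z‖) :
    ∀ z ∈ D, F z ≠ 0 →
      ContDiffAt ℝ (⊤ : ℕ∞) h z ∧
      h z * (cpdx (cpdx h) z + cpdy (cpdy h) z) = (cpdx h z) ^ 2 + (cpdy h z) ^ 2 ∧
      (cpdx h z) ^ 2 + (cpdy h z) ^ 2 = (‖deriv F z‖) ^ 2 ∧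
      (‖deriv F z‖ < 1 → 0 < 1 - (cpdx h z) ^ 2 - (cpdy h z) ^ 2) ∧
      (1 < ‖deriv F z‖ → 1 - (cpdx h z) ^ 2 - (cpdy h z) ^ 2 < 0) ∧
      (‖deriv F z‖ = 1 → 1 - (cpdx h z) ^ 2 - (cpdy h z) ^ 2 = 0) := by
  intro z hz hFz
  set c : ℂ := F z with hc_def
  have hc : c ≠ 0 := hFz
  set a : ℝ := ‖c‖ with ha_def
  have ha : 0 < a := by simpa [ha_def] using norm_pos_iff.mpr hc
  -- the open neighborhood V of z
  set V : Set ℂ := D ∩ (fun w => F w / c) ⁻¹' Metric.ball (1:ℂ) (1/2) with hV_def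
  have hVopen : IsOpen V :=
    (hF.continuousOn.div_const c).isOpen_inter_preimage hD Metric.isOpen_ball
  have hzV : z ∈ V := by
    refine ⟨hz, ?_⟩
    have : F z / c = 1 := div_self hc
    simp [this]
  have hVD : V ⊆ D := Set.inter_subset_left
  have hslit : ∀ w ∈ V, F w / c ∈ Complex.slitPlane := by
    rintro w ⟨-, hw⟩
    simp only [Set.mem_preimage, Metric.mem_ball, Complex.dist_eq] at hw
    have h1 : |(F w / c - 1).re| ≤ ‖F w / c - 1‖ := Complex.abs_re_le_norm _
    have h2 : (F w / c - 1).re = (F w / c).re - 1 := by simp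
    left
    rw [h2] at h1
    have := abs_le.mp h1
    linarith [this.1]
  have hne : ∀ w ∈ V, F w ≠ 0 := by
    intro w hw hw0
    have := Complex.slitPlane_ne_zero (hslit w hw)
    simp [hw0] at this
  -- logarithm
  set g : ℂ → ℂ := fun w => Complex.log (F w / c) with hg_def
  set G : ℂ → ℂ := fun w => deriv F w / F w with hG_def
  have hFd : ∀ w ∈ V, HasDerivAt F (deriv F w) w := fun w hw =>
    (hF.differentiableAt (hD.mem_nhds (hVD hw))).hasDerivAt
  have hg : ∀ w ∈ V, HasDerivAt g (G w) w := by
    intro w hw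
    have := ((hFd w hw).div_const c).clog (hslit w hw)
    convert this using 1
    field_simp [hG_def]
    rfl
  have hhe : ∀ w ∈ V, h w = a * Real.exp ((g w).re) := by
    intro w hw
    have hexp : Complex.exp (g w) = F w / c := Complex.exp_log (div_ne_zero (hne w hw) hc)
    have : F w = c * Complex.exp (g w) := by rw [hexp]; field_simp
    rw [hdef w, this, norm_mul, Complex.norm_exp]
  set u : ℂ → ℝ := fun w => (g w).re with hu_def
  -- first fderiv of h on V
  set L : ℂ → (ℂ →L[ℝ] ℝ) := fun w =>
    Complex.reCLM.comp ((ContinuousLinearMap.restrictScalars ℝ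
      ((1 : ℂ →L[ℂ] ℂ).smulRight (G w)))) with hL_def
  have hLap : ∀ w v, L w v = (G w * v).re := by
    intro w v
    simp [hL_def, mul_comm]
  have hu : ∀ w ∈ V, HasFDerivAt u (L w) w := by
    intro w hw
    exact Complex.reCLM.hasFDerivAt.comp w ((hg w hw).hasFDerivAt.restrictScalars ℝ)
  set E : ℂ → (ℂ →L[ℝ] ℝ) := fun w => (a * Real.exp (u w)) • L w with hE_def
  have hphi : ∀ w ∈ V, HasFDerivAt (fun w => a * Real.exp (u w)) (E w) w := by
    intro w hw
    have h1 : HasFDerivAt (fun w => Real.exp (u w)) (Real.exp (u w) • L w) w :=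
      (Real.hasDerivAt_exp (u w)).comp_hasFDerivAt w (hu w hw)
    have h2 := h1.const_mul a
    show HasFDerivAt _ ((a * Real.exp (u w)) • L w) w
    rw [mul_smul]
    exact h2
  have hh : ∀ w ∈ V, HasFDerivAt h (E w) w := by
    intro w hw
    exact (hphi w hw).congr_of_eventuallyEq
      (Filter.eventuallyEq_of_mem (hVopen.mem_nhds hw) hhe)
  have hEap : ∀ w ∈ V, ∀ v, E w v = h w * (G w * v).re := by
    intro w hw v
    rw [hE_def]
    simp only [ContinuousLinearMap.smul_apply, smul_eq_mul, hLap]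
    rw [hhe w hw]
  have hcpdx : ∀ w ∈ V, cpdx h w = h w * (G w).re := by
    intro w hw
    rw [cpdx, (hh w hw).fderiv, hEap w hw]
    simp
  have hcpdy : ∀ w ∈ V, cpdy h w = -(h w * (G w).im) := by
    intro w hw
    rw [cpdy, (hh w hw).fderiv, hEap w hw]
    simp [Complex.mul_re]
  -- G is differentiable at z
  have hGdiff : DifferentiableAt ℂ G z := by
    have hdF : DifferentiableAt ℂ (deriv F) z :=
      ((hF.analyticOnNhd hD).deriv).differentiableOn.differentiableAt (hD.mem_nhds hz)
    exact hdF.div (hF.differentiableAt (hD.mem_nhds hz)) hFz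
  set g2 : ℂ := deriv G z with hg2_def
  have hG2 : HasDerivAt G g2 z := hGdiff.hasDerivAt
  set LG : ℂ →L[ℝ] ℂ := ContinuousLinearMap.restrictScalars ℝ
      ((1 : ℂ →L[ℂ] ℂ).smulRight g2) with hLG_def
  have hLGap : ∀ v, LG v = g2 * v := by intro v; simp [hLG_def, mul_comm]
  have hGF : HasFDerivAt G LG z := hG2.hasFDerivAt.restrictScalars ℝ
  -- second derivatives
  have hzero : ∀ (f q : ℂ → ℝ), (∀ w ∈ V, f w = q w) → fderiv ℝ f z = fderiv ℝ q z := by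
    intro f q hfq
    exact Filter.EventuallyEq.fderiv_eq (Filter.eventuallyEq_of_mem (hVopen.mem_nhds hzV) hfq)
  -- cpdx h agrees on V with ψ₁
  have hpsi1 : ∀ w ∈ V, cpdx h w = (a * Real.exp (u w)) * (G w).re := by
    intro w hw; rw [hcpdx w hw, hhe w hw]
  have hpsi2 : ∀ w ∈ V, cpdy h w = -((a * Real.exp (u w)) * (G w).im) := by
    intro w hw; rw [hcpdy w hw, hhe w hw]
  -- derivative of re ∘ G and im ∘ G at z
  have hreG : HasFDerivAt (fun w => (G w).re) (Complex.reCLM.comp LG) z :=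
    Complex.reCLM.hasFDerivAt.comp z hGF
  have himG : HasFDerivAt (fun w => (G w).im) (Complex.imCLM.comp LG) z :=
    Complex.imCLM.hasFDerivAt.comp z hGF
  -- derivative of ψ₁ at z
  have hpsi1' : HasFDerivAt (fun w => (a * Real.exp (u w)) * (G w).re)
      ((a * Real.exp (u z)) • (Complex.reCLM.comp LG) + (G z).re • E z) z :=
    (hphi z hzV).mul hreG
  have hpsi2' : HasFDerivAt (fun w => -((a * Real.exp (u w)) * (G w).im))
      (-((a * Real.exp (u z)) • (Complex.imCLM.comp LG) + (G z).im • E z)) z :=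
    ((hphi z hzV).mul himG).neg
  have hhz : h z = a * Real.exp (u z) := hhe z hzV
  set p : ℝ := (G z).re with hp_def
  set q : ℝ := (G z).im with hq_def
  have hxx : cpdx (cpdx h) z = h z * (p * p) + h z * g2.re := by
    rw [cpdx, hzero (cpdx h) _ hpsi1, hpsi1'.fderiv]
    simp only [ContinuousLinearMap.add_apply, ContinuousLinearMap.smul_apply,
      ContinuousLinearMap.comp_apply, smul_eq_mul]
    rw [hLGap, hEap z hzV, ← hhz]
    simp [hp_def]
    ring
  have hyy : cpdy (cpdy h) z = h z * (q * q) - h z * g2.re := by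
    rw [cpdy, hzero (cpdy h) _ hpsi2, hpsi2'.fderiv]
    simp only [ContinuousLinearMap.neg_apply, ContinuousLinearMap.add_apply,
      ContinuousLinearMap.smul_apply, ContinuousLinearMap.comp_apply, smul_eq_mul]
    rw [hLGap, hEap z hzV, ← hhz]
    simp [Complex.mul_re, hq_def]
    ring
  have hx1 : cpdx h z = h z * p := hcpdx z hzV
  have hy1 : cpdy h z = -(h z * q) := hcpdy z hzV
  -- the key modulus identity
  have hkey : (cpdx h z) ^ 2 + (cpdy h z) ^ 2 = (‖deriv F z‖) ^ 2 := by
    rw [hx1, hy1, hdef z]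
    have hFG : deriv F z = F z * G z := by rw [hG_def]; field_simp; exact (mul_div_cancel_right₀ _ hFz).symm
    have habs : (‖G z‖) ^ 2 = p ^ 2 + q ^ 2 := by
      rw [Complex.sq_norm, Complex.normSq_apply, hp_def, hq_def]; ring
    rw [hFG, norm_mul]
    linear_combination (-(‖F z‖ ^ 2)) * habs
  -- smoothness
  have hsmooth : ContDiffAt ℝ (⊤ : ℕ∞) h z := by
    have hganal : AnalyticAt ℂ g z := by
      have : DifferentiableOn ℂ g V := fun w hw => ((hg w hw).differentiableAt).differentiableWithinAt
      exact this.analyticAt (hVopen.mem_nhds hzV)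
    have hgsm : ContDiffAt ℝ (⊤ : ℕ∞) g z := (hganal.contDiffAt).restrict_scalars ℝ
    have h1 : ContDiffAt ℝ (⊤ : ℕ∞) u z := Complex.reCLM.contDiff.contDiffAt.comp z hgsm
    have h2 : ContDiffAt ℝ (⊤ : ℕ∞) (fun w => Real.exp (u w)) z :=
      Real.contDiff_exp.contDiffAt.comp z h1
    have h3 : ContDiffAt ℝ (⊤ : ℕ∞) (fun w => a * Real.exp (u w)) z := contDiffAt_const.mul h2
    exact h3.congr_of_eventuallyEq
      (Filter.eventuallyEq_of_mem (hVopen.mem_nhds hzV) hhe)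
  refine ⟨hsmooth, ?_, hkey, ?_, ?_, ?_⟩
  · rw [hxx, hyy, hx1, hy1]; ring
  · intro hlt
    have h0 : 0 ≤ ‖deriv F z‖ := by positivity
    nlinarith [hkey]
  · intro hlt
    nlinarith [hkey]
  · intro heq
    rw [heq] at hkey
    norm_num at hkey
    linarith
end

section
/- Let D ⊆ ℂ be open, let f be holomorphic on D, and define h : D → ℝ by h(x + iy) = |f(x + iy)|² = a² + b², where f = a + ib. Then at every point of D the Hessian determinant of h satisfies h_xx·h_yy − h_xy² = 4·(|f'|⁴ − |f·f''|²). Consequently, where f² ≠ 0 and h_x² + h_y² ≠ 1, the Gaussian curvature of the modular surface generated by F = f² in Lorentz–Minkowski space 𝔼₁³ is K = −4(|f'|⁴ − |f f''|²)/(1 − 4|f f'|²)². -/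
open Complex

/-- The real-linear map `v ↦ (c * v).re` on `ℂ`. -/
noncomputable def remul (c : ℂ) : ℂ →L[ℝ] ℝ :=
  Complex.reCLM.comp ((c • (1 : ℂ →L[ℂ] ℂ)).restrictScalars ℝ)

@[simp] lemma remul_apply (c v : ℂ) : remul c v = (c * v).re := by
  simp [remul, smul_eq_mul]

lemma hasFDerivAt_habs {f : ℂ → ℂ} {w A : ℂ} (hfw : HasDerivAt f A w) :
    HasFDerivAt (fun z => ‖f z‖ ^ 2)
      (remul (2 * (starRingEnd ℂ) (f w) * A)) w := by
  have hM : HasFDerivAt f ((ContinuousLinearMap.smulRight (1 : ℂ →L[ℂ] ℂ) A).restrictScalars ℝ) w :=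
    hfw.hasFDerivAt.restrictScalars ℝ
  have hre : HasFDerivAt (fun z => (f z).re)
      (Complex.reCLM.comp ((ContinuousLinearMap.smulRight (1 : ℂ →L[ℂ] ℂ) A).restrictScalars ℝ)) w :=
    Complex.reCLM.hasFDerivAt.comp w hM
  have him : HasFDerivAt (fun z => (f z).im)
      (Complex.imCLM.comp ((ContinuousLinearMap.smulRight (1 : ℂ →L[ℂ] ℂ) A).restrictScalars ℝ)) w :=
    Complex.imCLM.hasFDerivAt.comp w hM
  have := (hre.mul hre).add (him.mul him)
  have key1 : (fun z => ‖f z‖ ^ 2) =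
      ((fun z => (f z).re) * fun z => (f z).re) + (fun z => (f z).im) * fun z => (f z).im := by
    funext z
    simp [Complex.sq_norm, Complex.normSq_apply]
  have key2 : remul (2 * (starRingEnd ℂ) (f w) * A) =
      (f w).re • Complex.reCLM.comp ((ContinuousLinearMap.smulRight (1 : ℂ →L[ℂ] ℂ) A).restrictScalars ℝ) +
        (f w).re • Complex.reCLM.comp ((ContinuousLinearMap.smulRight (1 : ℂ →L[ℂ] ℂ) A).restrictScalars ℝ) +
      ((f w).im • Complex.imCLM.comp ((ContinuousLinearMap.smulRight (1 : ℂ →L[ℂ] ℂ) A).restrictScalars ℝ) +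
        (f w).im • Complex.imCLM.comp ((ContinuousLinearMap.smulRight (1 : ℂ →L[ℂ] ℂ) A).restrictScalars ℝ)) := by
    ext v
    simp [Complex.mul_re, Complex.mul_im, smul_eq_mul]
    ring
  rw [key1, key2]
  exact this

/-- For `f` holomorphic on an open set `D` and `h = |f|²`, the Hessian determinant of
`h` equals `4(|f'|⁴ - |f·f''|²)` on `D`; consequently, where `f² ≠ 0` and
`h_x² + h_y² ≠ 1`, the Gaussian curvature of the modular surface generated by
`F = f²` in Lorentz-Minkowski 3-space is `K = -4(|f'|⁴ - |f f''|²)/(1 - 4|f f'|²)²`. -/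
theorem hessian_det_modular_square
    (D : Set ℂ) (hD : IsOpen D) (f : ℂ → ℂ) (hf : DifferentiableOn ℂ f D)
    (h : ℂ → ℝ) (hdef : ∀ z, h z = (‖f z‖) ^ 2) :
    ∀ z ∈ D,
      cpdx (cpdx h) z * cpdy (cpdy h) z - (cpdy (cpdx h) z) ^ 2 =
        4 * ((‖deriv f z‖) ^ 4 -
          (‖f z * deriv (deriv f) z‖) ^ 2) ∧
      ((f z) ^ 2 ≠ 0 → (cpdx h z) ^ 2 + (cpdy h z) ^ 2 ≠ 1 →
        -(cpdx (cpdx h) z * cpdy (cpdy h) z - (cpdy (cpdx h) z) ^ 2) /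
            (1 - (cpdx h z) ^ 2 - (cpdy h z) ^ 2) ^ 2 =
          -(4 * ((‖deriv f z‖) ^ 4 -
              (‖f z * deriv (deriv f) z‖) ^ 2)) /
            (1 - 4 * (‖f z * deriv f z‖) ^ 2) ^ 2) := by
  have hE : h = fun z => ‖f z‖ ^ 2 := funext hdef
  subst hE
  intro z hz
  have hfa : AnalyticOnNhd ℂ f D := hf.analyticOnNhd hD
  have hfa' : AnalyticOnNhd ℂ (deriv f) D := hfa.deriv
  have hd1 : HasDerivAt f (deriv f z) z :=
    (hf.differentiableAt (hD.mem_nhds hz)).hasDerivAt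
  have hd2 : HasDerivAt (deriv f) (deriv (deriv f) z) z :=
    ((hfa'.differentiableOn).differentiableAt (hD.mem_nhds hz)).hasDerivAt
  -- first derivatives on D
  have hfd : ∀ w ∈ D, fderiv ℝ (fun z => ‖f z‖ ^ 2) w
      = remul (2 * (starRingEnd ℂ) (f w) * deriv f w) := fun w hw =>
    (hasFDerivAt_habs ((hf.differentiableAt (hD.mem_nhds hw)).hasDerivAt)).fderiv
  have e1 : Set.EqOn (cpdx fun z => ‖f z‖ ^ 2)
      (fun w => (2 * ((starRingEnd ℂ) (f w) * deriv f w)).re) D := by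
    intro w hw
    simp only [cpdx, hfd w hw, remul_apply, mul_one, mul_assoc]
  have e2 : Set.EqOn (cpdy fun z => ‖f z‖ ^ 2)
      (fun w => -((2 * ((starRingEnd ℂ) (f w) * deriv f w)).im)) D := by
    intro w hw
    simp only [cpdy, hfd w hw, remul_apply]
    simp [Complex.mul_re, mul_assoc]
    ring
  -- second derivative of the inner complex function
  set A := deriv f z with hA
  set B := f z with hB
  set C := deriv (deriv f) z with hC
  have hMf : HasFDerivAt f
      ((ContinuousLinearMap.smulRight (1 : ℂ →L[ℂ] ℂ) A).restrictScalars ℝ) z :=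
    hd1.hasFDerivAt.restrictScalars ℝ
  have hMg : HasFDerivAt (deriv f)
      ((ContinuousLinearMap.smulRight (1 : ℂ →L[ℂ] ℂ) C).restrictScalars ℝ) z :=
    hd2.hasFDerivAt.restrictScalars ℝ
  have hconj : HasFDerivAt (fun w => (starRingEnd ℂ) (f w))
      ((Complex.conjCLE.toContinuousLinearMap).comp
        ((ContinuousLinearMap.smulRight (1 : ℂ →L[ℂ] ℂ) A).restrictScalars ℝ)) z :=
    (Complex.conjCLE.toContinuousLinearMap).hasFDerivAt.comp z hMf
  have hmul := hconj.mul hMg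
  have hinner := hmul.const_mul (2 : ℂ)
  set Lc := (2 : ℂ) • ((starRingEnd ℂ) (f z) •
      ((ContinuousLinearMap.smulRight (1 : ℂ →L[ℂ] ℂ) C).restrictScalars ℝ) +
      deriv f z • ((Complex.conjCLE.toContinuousLinearMap).comp
        ((ContinuousLinearMap.smulRight (1 : ℂ →L[ℂ] ℂ) A).restrictScalars ℝ))) with hLc
  have Hg1 : HasFDerivAt (fun w => (2 * ((starRingEnd ℂ) (f w) * deriv f w)).re)
      (Complex.reCLM.comp Lc) z := Complex.reCLM.hasFDerivAt.comp z hinner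
  have Hg2 : HasFDerivAt (fun w => -((2 * ((starRingEnd ℂ) (f w) * deriv f w)).im))
      (-(Complex.imCLM.comp Lc)) z := (Complex.imCLM.hasFDerivAt.comp z hinner).neg
  have hev1 : (cpdx fun z => ‖f z‖ ^ 2)
      =ᶠ[nhds z] (fun w => (2 * ((starRingEnd ℂ) (f w) * deriv f w)).re) :=
    Filter.eventuallyEq_of_mem (hD.mem_nhds hz) e1
  have hev2 : (cpdy fun z => ‖f z‖ ^ 2)
      =ᶠ[nhds z] (fun w => -((2 * ((starRingEnd ℂ) (f w) * deriv f w)).im)) :=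
    Filter.eventuallyEq_of_mem (hD.mem_nhds hz) e2
  have hxx : cpdx (cpdx fun z => ‖f z‖ ^ 2) z = (Lc 1).re := by
    rw [cpdx, hev1.fderiv_eq, Hg1.fderiv]; rfl
  have hxy : cpdy (cpdx fun z => ‖f z‖ ^ 2) z = (Lc Complex.I).re := by
    rw [cpdy, hev1.fderiv_eq, Hg1.fderiv]; rfl
  have hyy : cpdy (cpdy fun z => ‖f z‖ ^ 2) z = -(Lc Complex.I).im := by
    rw [cpdy, hev2.fderiv_eq, Hg2.fderiv]; rfl
  have hLc1 : Lc 1 = 2 * ((starRingEnd ℂ) B * C + A * (starRingEnd ℂ) A) := by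
    simp [hLc, smul_eq_mul]
    ring
  have hLcI : Lc Complex.I = 2 * ((starRingEnd ℂ) B * (Complex.I * C) +
      A * (starRingEnd ℂ) (Complex.I * A)) := by
    simp [hLc, smul_eq_mul]
    ring
  have habs4 : (‖A‖) ^ 4 = (Complex.normSq A) ^ 2 := by
    rw [show (4:ℕ) = 2*2 from rfl, pow_mul, Complex.sq_norm]
  have part1 : cpdx (cpdx fun z => ‖f z‖ ^ 2) z *
      cpdy (cpdy fun z => ‖f z‖ ^ 2) z -
      (cpdy (cpdx fun z => ‖f z‖ ^ 2) z) ^ 2 =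
        4 * ((‖A‖) ^ 4 - (‖B * C‖) ^ 2) := by
    rw [hxx, hxy, hyy, hLc1, hLcI, habs4, Complex.sq_norm]
    simp [Complex.normSq_apply, Complex.mul_re, Complex.mul_im]
    ring
  refine ⟨part1, fun _ _ => ?_⟩
  have hx0 : cpdx (fun z => ‖f z‖ ^ 2) z = (2 * ((starRingEnd ℂ) B * A)).re :=
    e1 hz
  have hy0 : cpdy (fun z => ‖f z‖ ^ 2) z = -((2 * ((starRingEnd ℂ) B * A)).im) :=
    e2 hz
  have hden : 1 - (cpdx (fun z => ‖f z‖ ^ 2) z) ^ 2 -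
      (cpdy (fun z => ‖f z‖ ^ 2) z) ^ 2 =
      1 - 4 * (‖B * A‖) ^ 2 := by
    rw [hx0, hy0, Complex.sq_norm]
    simp [Complex.normSq_apply, Complex.mul_re, Complex.mul_im]
    ring
  rw [part1, hden]
end
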